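/- arXiv:2308.05551 — 10 statements merged into one kernel-verified Lean document; each statement's English description precedes it below -/
import Mathlib

section
/- Let n, k, l be positive integers and let A ∈ ℝ^{n×n}, C ∈ ℝ^{l×n}, E ∈ ℝ^{n×k}. Let γ > 0 and let P ∈ ℝ^{n×n} be symmetric positive definite satisfying P A + Aᵀ P + γ⁻² P E Eᵀ P + Cᵀ C = 0. Let v : [0,∞) → ℝ^k be continuous and let x : [0,∞) → ℝ^n be continuously differentiable with x(0) = 0 and x'(t) = A x(t) + E v(t). Then for every T ≥ 0, ∫₀ᵀ (|C x(t)|² − γ² |v(t)|²) dt ≤ 0, where |·| denotes the Euclidean norm. -/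
/-!
The quadratic form `V(ξ) = ξᵀPξ` is a storage function. Along a trajectory, with `u = EᵀPx`, the
Riccati equation completes the square:
`V(x)' + |Cx|² - γ²|v|² = -|γ⁻¹u - γv|² ≤ 0`.
Integrating over `[0, T]` and using `V(x 0) = 0 ≤ V(x T)` gives the bound.
-/

open Matrix Set

section Riccati

variable {R m n k : Type*} [Field R] [Fintype m] [Fintype n] [Fintype k]

theorem riccati_completion_of_squares (A : Matrix n n R) (C : Matrix m n R) (E : Matrix n k R)
    {γ : R} (hγ : γ ≠ 0) {P : Matrix n n R} (hP : P.IsSymm)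
    (hARE : P * A + Aᵀ * P + (γ ^ 2)⁻¹ • (P * (E * Eᵀ) * P) + Cᵀ * C = 0) (X : n → R) (w : k → R) :
    (A *ᵥ X + E *ᵥ w) ⬝ᵥ P *ᵥ X + X ⬝ᵥ P *ᵥ (A *ᵥ X + E *ᵥ w)
        + (C *ᵥ X) ⬝ᵥ C *ᵥ X - γ ^ 2 * (w ⬝ᵥ w) =
      -((γ⁻¹ • (Eᵀ *ᵥ P *ᵥ X) - γ • w) ⬝ᵥ (γ⁻¹ • (Eᵀ *ᵥ P *ᵥ X) - γ • w)) := by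
  set u := Eᵀ *ᵥ P *ᵥ X
  have hP_left (Y : n → R) : X ⬝ᵥ P *ᵥ Y = (P *ᵥ X) ⬝ᵥ Y := by
    rw [dotProduct_mulVec, ← mulVec_transpose, hP.eq]
  have hE (Y : k → R) : (P *ᵥ X) ⬝ᵥ E *ᵥ Y = u ⬝ᵥ Y := by
    rw [dotProduct_mulVec, ← mulVec_transpose]
  have hquad : X ⬝ᵥ (P * A + Aᵀ * P + (γ ^ 2)⁻¹ • (P * (E * Eᵀ) * P) + Cᵀ * C) *ᵥ X = 0 := by
    rw [hARE, zero_mulVec, dotProduct_zero]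
  simp only [add_mulVec, smul_mulVec, ← mulVec_mulVec, dotProduct_add, dotProduct_smul,
    smul_eq_mul, hP_left, dotProduct_transpose_mulVec, hE] at hquad
  simp only [mulVec_add, dotProduct_add, sub_dotProduct, dotProduct_sub,
    smul_dotProduct, dotProduct_smul, smul_eq_mul, hP_left, hE, dotProduct_comm _ (P *ᵥ X)]
  rw [dotProduct_comm w u]
  linear_combination hquad - 2 * (u ⬝ᵥ w) * inv_mul_cancel₀ hγ

theorem riccati_dissipation_inequality [LinearOrder R] [IsStrictOrderedRing R]
    (A : Matrix n n R) (C : Matrix m n R) (E : Matrix n k R)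
    {γ : R} (hγ : γ ≠ 0) {P : Matrix n n R} (hP : P.IsSymm)
    (hARE : P * A + Aᵀ * P + (γ ^ 2)⁻¹ • (P * (E * Eᵀ) * P) + Cᵀ * C = 0) (X : n → R) (w : k → R) :
    ∑ i, (C *ᵥ X) i ^ 2 - γ ^ 2 * ∑ j, w j ^ 2 ≤
      -((A *ᵥ X + E *ᵥ w) ⬝ᵥ P *ᵥ X + X ⬝ᵥ P *ᵥ (A *ᵥ X + E *ᵥ w)) := by
  have hsq := riccati_completion_of_squares A C E hγ hP hARE X w
  have hr := Fintype.sum_nonneg fun j => mul_self_nonneg ((γ⁻¹ • (Eᵀ *ᵥ P *ᵥ X) - γ • w) j)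
  simp only [dotProduct, sq] at hsq hr ⊢
  linarith

end Riccati

section Calculus

variable {𝕜 m n : Type*} [NontriviallyNormedField 𝕜] [Fintype n]
  {s : Set 𝕜} {t : 𝕜}

theorem HasDerivWithinAt.matrix_mulVec {x : 𝕜 → n → 𝕜} {x' : n → 𝕜}
    (hx : HasDerivWithinAt x x' s t) (M : Matrix m n 𝕜) :
    HasDerivWithinAt (fun τ => M *ᵥ x τ) (M *ᵥ x') s t :=
  hasDerivWithinAt_pi.mpr fun i => HasDerivWithinAt.fun_sum fun j _ =>
    (hasDerivWithinAt_pi.mp hx j).const_mul (M i j)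

theorem HasDerivWithinAt.dotProduct {x y : 𝕜 → n → 𝕜} {x' y' : n → 𝕜}
    (hx : HasDerivWithinAt x x' s t) (hy : HasDerivWithinAt y y' s t) :
    HasDerivWithinAt (fun τ => x τ ⬝ᵥ y τ) (x' ⬝ᵥ y t + x t ⬝ᵥ y') s t := by
  simp only [_root_.dotProduct, ← Finset.sum_add_distrib]
  exact HasDerivWithinAt.fun_sum fun i _ =>
    (hasDerivWithinAt_pi.mp hx i).mul (hasDerivWithinAt_pi.mp hy i)

end Calculus

theorem stmt_1_general (n k l : ℕ)
    (A : Matrix (Fin n) (Fin n) ℝ) (C : Matrix (Fin l) (Fin n) ℝ)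
    (E : Matrix (Fin n) (Fin k) ℝ)
    (γ : ℝ) (hγ : 0 < γ)
    (P : Matrix (Fin n) (Fin n) ℝ) (hPsymm : P.IsSymm) (hP : P.PosDef)
    (hARE : P * A + Aᵀ * P + (γ ^ 2)⁻¹ • (P * (E * Eᵀ) * P) + Cᵀ * C = 0)
    (v : ℝ → Fin k → ℝ) (hv : ContinuousOn v (Ici 0))
    (x : ℝ → Fin n → ℝ)
    (hx0 : x 0 = 0)
    (hx : ∀ t ∈ Ici (0 : ℝ),
      HasDerivWithinAt x (A.mulVec (x t) + E.mulVec (v t)) (Ici 0) t) :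
    ∀ T ≥ (0 : ℝ),
      ∫ t in (0 : ℝ)..T, ((∑ i, (C.mulVec (x t) i) ^ 2) - γ ^ 2 * ∑ j, (v t j) ^ 2) ≤ 0 := by
  intro T hT
  have hIcc : Icc 0 T ⊆ Ici (0 : ℝ) := Icc_subset_Ici_self
  have hx_cont : ContinuousOn x (Ici 0) := fun t ht => (hx t ht).continuousWithinAt
  have hV_deriv (t : ℝ) (ht : t ∈ Ici 0) :=
    ((hx t ht).dotProduct ((hx t ht).matrix_mulVec P)).neg
  have hV_cont : ContinuousOn (fun t => -(x t ⬝ᵥ P *ᵥ x t)) (Icc 0 T) :=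
    fun t ht => (hV_deriv t (hIcc ht)).continuousWithinAt.mono hIcc
  have hV_nonneg : 0 ≤ x T ⬝ᵥ P *ᵥ x T := by
    simpa only [star_trivial] using hP.posSemidef.dotProduct_mulVec_nonneg (x T)
  have hφ_cont : ContinuousOn
      (fun t => (∑ i, (C.mulVec (x t) i) ^ 2) - γ ^ 2 * ∑ j, (v t j) ^ 2) (Icc 0 T) := by
    have := hx_cont.mono hIcc
    have := hv.mono hIcc
    fun_prop
  calc ∫ t in (0 : ℝ)..T, ((∑ i, (C.mulVec (x t) i) ^ 2) - γ ^ 2 * ∑ j, (v t j) ^ 2)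
      ≤ -(x T ⬝ᵥ P *ᵥ x T) - -(x 0 ⬝ᵥ P *ᵥ x 0) :=
        intervalIntegral.integral_le_sub_of_hasDeriv_right_of_le hT hV_cont
          (fun t ht => (hV_deriv t ht.1.le).mono (Ioi_subset_Ici ht.1.le))
          hφ_cont.integrableOn_Icc
          fun t _ => riccati_dissipation_inequality A C E hγ.ne' hPsymm hARE (x t) (v t)
    _ ≤ 0 := by simpa [hx0] using hV_nonneg

/-- Corollary 1 (Bounded Real Lemma): for the uncontrolled system
ẋ = Ax + Ev with zero initial condition, a positive definite solution of the
Riccati equation PA + AᵀP + γ⁻²PEEᵀP + CᵀC = 0 certifies L² gain ≤ γ. -/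
theorem stmt_1 (n k l : ℕ) (hn : 0 < n) (hk : 0 < k) (hl : 0 < l)
    (A : Matrix (Fin n) (Fin n) ℝ) (C : Matrix (Fin l) (Fin n) ℝ)
    (E : Matrix (Fin n) (Fin k) ℝ)
    (γ : ℝ) (hγ : 0 < γ)
    (P : Matrix (Fin n) (Fin n) ℝ) (hPsymm : P.IsSymm) (hP : P.PosDef)
    (hARE : P * A + Aᵀ * P + (γ ^ 2)⁻¹ • (P * (E * Eᵀ) * P) + Cᵀ * C = 0)
    (v : ℝ → Fin k → ℝ) (hv : ContinuousOn v (Ici 0))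
    (x : ℝ → Fin n → ℝ)
    (hx0 : x 0 = 0)
    (hx : ∀ t ∈ Ici (0 : ℝ),
      HasDerivWithinAt x (A.mulVec (x t) + E.mulVec (v t)) (Ici 0) t) :
    ∀ T ≥ (0 : ℝ),
      ∫ t in (0 : ℝ)..T, ((∑ i, (C.mulVec (x t) i) ^ 2) - γ ^ 2 * ∑ j, (v t j) ^ 2) ≤ 0 :=
  stmt_1_general n k l A C E γ hγ P hPsymm hP hARE v hv x hx0 hx
end

section
/- Let c₁ > 0, c₂ > 0 with c₁ + c₂ ≤ √2, let ρₓ ≥ 0, and set γ₀ = 2√(1+ρₓ) / ((c₁+c₂)√(4−(c₁+c₂)²)). For every integer n ≥ 1 put ωₙ = n² and ζₙ = (c₁ ωₙ⁻¹ + c₂ ωₙ)/2. Let w : [0,∞) → ℝ be continuous and let z : [0,∞) → ℝ be twice continuously differentiable with z(0) = z'(0) = 0 and z''(t) + 2ζₙωₙ z'(t) + ωₙ² z(t) = w(t) for all t ≥ 0. Then for every T ≥ 0, ∫₀ᵀ ((1 + ρₓωₙ²) z(t)² − γ₀² w(t)²) dt ≤ 0. -/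
open Set

/-!
Each mode is a damped oscillator `z'' + a z' + b z = w` with `a = 2ζω = c₁ + c₂ ω²` and
`b = ω²`. For `0 ≤ m ≤ min (a², 2b)` the quadratic storage function
`V = g (a b z² + m z z' + a z'²)` is nonnegative and, by completing a square, satisfies the
dissipation inequality `q z² - g w² + V' ≤ 0` as soon as `4 q ≤ g m (4 b - m)`. Integrating over
`[0, T]` with `V 0 = 0 ≤ V T` bounds the L² gain. Taking `m = (c₁ + c₂)²`, the choice of `γ₀`
makes the gain condition an equality for the fundamental mode `b = 1`, and it only gets weaker
for `b ≥ 1`.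
-/

namespace DampedOscillator

def storage (a b m x v : ℝ) : ℝ := a * b * x ^ 2 + m * x * v + a * v ^ 2

theorem storage_nonneg {a b m : ℝ} (ha : 0 < a) (hm : 0 ≤ m) (hma : m ≤ a ^ 2) (hmb : m ≤ 2 * b)
    (x v : ℝ) : 0 ≤ storage a b m x v := by
  have hdisc : m * m ≤ 4 * (a ^ 2 * b) := by nlinarith [mul_le_mul hma hmb hm (sq_nonneg a)]
  have hsq : a * storage a b m x v = (a * v + m / 2 * x) ^ 2 + (a ^ 2 * b - m * m / 4) * x ^ 2 := by
    unfold storage; ring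
  have hscaled : 0 ≤ a * storage a b m x v := by
    rw [hsq]; nlinarith [sq_nonneg (a * v + m / 2 * x), sq_nonneg x]
  exact nonneg_of_mul_nonneg_right hscaled ha

theorem hasDerivWithinAt_storage (a b m : ℝ) {x v : ℝ → ℝ} {x' v' t : ℝ} {s : Set ℝ}
    (hx : HasDerivWithinAt x x' s t) (hv : HasDerivWithinAt v v' s t) :
    HasDerivWithinAt (fun t ↦ storage a b m (x t) (v t))
      (2 * a * b * x t * x' + m * (x' * v t + x t * v') + 2 * a * v t * v') s t := by
  have h := (((hx.fun_pow 2).const_mul (a * b)).add ((hx.const_mul m).fun_mul hv)).add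
    ((hv.fun_pow 2).const_mul a)
  exact h.congr_deriv (by push_cast; ring)

theorem supply_add_deriv_storage_nonpos {a b m q g : ℝ} (hg : 0 < g) (hma : m ≤ a ^ 2)
    (hgain : 4 * q ≤ g * (m * (4 * b - m))) (x v acc : ℝ) :
    q * x ^ 2 - g * (acc + a * v + b * x) ^ 2
      + g * (2 * a * b * x * v + m * (v * v + x * acc) + 2 * a * v * acc) ≤ 0 := by
  have hsq : 4 * (q * x ^ 2 - g * (acc + a * v + b * x) ^ 2
      + g * (2 * a * b * x * v + m * (v * v + x * acc) + 2 * a * v * acc))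
      = -g * (2 * (acc + a * v + b * x) - m * x - 2 * a * v) ^ 2
        - (g * (m * (4 * b - m)) - 4 * q) * x ^ 2 - 4 * g * (a ^ 2 - m) * v ^ 2 := by
    ring
  nlinarith [mul_nonneg hg.le (sq_nonneg (2 * (acc + a * v + b * x) - m * x - 2 * a * v)),
    mul_nonneg (sub_nonneg.2 hgain) (sq_nonneg x),
    mul_nonneg (mul_nonneg hg.le (sub_nonneg.2 hma)) (sq_nonneg v)]

/-- For `m = a² ≤ 2 b`, `m (4 b - m) / 4` is the minimum over frequencies `ν` of
`|b - ν² + i a ν|²`, so `hgain` is then the sharp gain bound; a smaller `m` only strengthens it. -/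
theorem integral_supply_nonpos {a b m q g : ℝ} (ha : 0 < a) (hg : 0 < g) (hm : 0 ≤ m)
    (hma : m ≤ a ^ 2) (hmb : m ≤ 2 * b) (hgain : 4 * q ≤ g * (m * (4 * b - m)))
    {z z' z'' : ℝ → ℝ} (hz0 : z 0 = 0) (hz'0 : z' 0 = 0)
    (hz : ∀ t ∈ Ici (0 : ℝ), HasDerivWithinAt z (z' t) (Ici 0) t)
    (hz' : ∀ t ∈ Ici (0 : ℝ), HasDerivWithinAt z' (z'' t) (Ici 0) t)
    (hz'' : ContinuousOn z'' (Ici 0)) {T : ℝ} (hT : 0 ≤ T) :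
    ∫ t in (0 : ℝ)..T, (q * z t ^ 2 - g * (z'' t + a * z' t + b * z t) ^ 2) ≤ 0 := by
  have hsub : Icc 0 T ⊆ Ici (0 : ℝ) := Icc_subset_Ici_self
  have hzc : ContinuousOn z (Icc 0 T) := fun t ht ↦ ((hz t (hsub ht)).continuousWithinAt).mono hsub
  have hz'c : ContinuousOn z' (Icc 0 T) :=
    fun t ht ↦ ((hz' t (hsub ht)).continuousWithinAt).mono hsub
  have hz''c : ContinuousOn z'' (Icc 0 T) := hz''.mono hsub
  have hV : ∀ t ∈ Ioo 0 T, HasDerivWithinAt (fun t ↦ -(g * storage a b m (z t) (z' t)))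
      (-(g * (2 * a * b * z t * z' t + m * (z' t * z' t + z t * z'' t)
        + 2 * a * z' t * z'' t))) (Ioi t) t := fun t ht ↦
    (((hasDerivWithinAt_storage a b m (hz t ht.1.le) (hz' t ht.1.le)).const_mul g).neg).mono
      (Ioi_subset_Ici ht.1.le)
  have hint : MeasureTheory.IntegrableOn
      (fun t ↦ q * z t ^ 2 - g * (z'' t + a * z' t + b * z t) ^ 2) (Icc 0 T) :=
    ContinuousOn.integrableOn_Icc (by fun_prop)
  calc ∫ t in (0 : ℝ)..T, (q * z t ^ 2 - g * (z'' t + a * z' t + b * z t) ^ 2)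
      ≤ -(g * storage a b m (z T) (z' T)) - -(g * storage a b m (z 0) (z' 0)) :=
        intervalIntegral.integral_le_sub_of_hasDeriv_right_of_le hT
          (by simp only [storage]; fun_prop) hV hint fun t _ ↦ by
            linarith [supply_add_deriv_storage_nonpos (b := b) hg hma hgain (z t) (z' t) (z'' t)]
    _ ≤ 0 := by
        rw [hz0, hz'0, show storage a b m 0 0 = 0 by simp [storage]]
        linarith [mul_nonneg hg.le (storage_nonneg ha hm hma hmb (z T) (z' T))]

end DampedOscillator

theorem gain_condition_of_fundamental_mode {ρ g m b : ℝ} (hg : 0 ≤ g) (hb : 1 ≤ b)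
    (hfund : g * (m * (4 - m)) = 4 * (1 + ρ)) :
    4 * (1 + ρ * b) ≤ g * (m * (4 * b - m)) := by
  have hsplit : g * (m * (4 * b - m)) = 4 * (1 + ρ) * b + g * m ^ 2 * (b - 1) := by
    rw [← hfund]; ring
  nlinarith [mul_nonneg (mul_nonneg hg (sq_nonneg m)) (sub_nonneg.2 hb)]

theorem stmt_2_general (c₁ c₂ : ℝ) (hc₁ : 0 < c₁) (hc₂ : 0 < c₂)
    (hc : c₁ + c₂ ≤ Real.sqrt 2)
    (ρx : ℝ) (hρx : 0 ≤ ρx)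
    (γ₀ : ℝ)
    (hγ₀ : γ₀ = 2 * Real.sqrt (1 + ρx) /
      ((c₁ + c₂) * Real.sqrt (4 - (c₁ + c₂) ^ 2)))
    (n : ℕ) (hn : 1 ≤ n)
    (ω ζ : ℝ) (hω : ω = (n : ℝ) ^ 2) (hζ : ζ = (c₁ * ω⁻¹ + c₂ * ω) / 2)
    (w : ℝ → ℝ)
    (z z' z'' : ℝ → ℝ)
    (hz0 : z 0 = 0) (hz'0 : z' 0 = 0)
    (hz : ∀ t ∈ Ici (0 : ℝ), HasDerivWithinAt z (z' t) (Ici 0) t)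
    (hz' : ∀ t ∈ Ici (0 : ℝ), HasDerivWithinAt z' (z'' t) (Ici 0) t)
    (hz'' : ContinuousOn z'' (Ici 0))
    (hode : ∀ t ∈ Ici (0 : ℝ), z'' t + 2 * ζ * ω * z' t + ω ^ 2 * z t = w t) :
    ∀ T ≥ (0 : ℝ),
      ∫ t in (0 : ℝ)..T, ((1 + ρx * ω ^ 2) * (z t) ^ 2 - γ₀ ^ 2 * (w t) ^ 2) ≤ 0 := by
  intro T hT
  have hs : 0 < c₁ + c₂ := by linarith
  have hs2 : (c₁ + c₂) ^ 2 ≤ 2 := (Real.le_sqrt hs.le (by norm_num)).1 hc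
  have hω1 : 1 ≤ ω := hω ▸ one_le_pow₀ (by exact_mod_cast hn)
  have hω2 : 1 ≤ ω ^ 2 := one_le_pow₀ hω1
  have hdamp : 2 * ζ * ω = c₁ + c₂ * ω ^ 2 := by
    rw [hζ]; field_simp [(zero_lt_one.trans_le hω1).ne']
  have hfund : γ₀ ^ 2 * ((c₁ + c₂) ^ 2 * (4 - (c₁ + c₂) ^ 2)) = 4 * (1 + ρx) := by
    have h4 : 0 < 4 - (c₁ + c₂) ^ 2 := by linarith
    rw [hγ₀, div_pow, mul_pow, mul_pow, Real.sq_sqrt (by linarith), Real.sq_sqrt h4.le,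
      div_mul_cancel₀ _ (by positivity)]
    ring
  have hγ : 0 < γ₀ ^ 2 :=
    (sq_nonneg γ₀).lt_of_ne fun h ↦ by rw [← h, zero_mul] at hfund; linarith
  have hsa : c₁ + c₂ ≤ 2 * ζ * ω := by rw [hdamp]; nlinarith
  have hma : (c₁ + c₂) ^ 2 ≤ (2 * ζ * ω) ^ 2 := pow_le_pow_left₀ hs.le hsa 2
  refine (intervalIntegral.integral_congr fun t ht ↦ ?_).trans_le
    (DampedOscillator.integral_supply_nonpos (hs.trans_le hsa) hγ (sq_nonneg _) hma (by linarith)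
      (gain_condition_of_fundamental_mode hγ.le hω2 hfund) hz0 hz'0 hz hz' hz'' hT)
  rw [uIcc_of_le hT] at ht
  simp only [hode t ht.1]

/-- Proposition 2 (modal form): each mode of the control-free damped
Euler–Bernoulli beam has L² gain at most γ₀. -/
theorem stmt_2 (c₁ c₂ : ℝ) (hc₁ : 0 < c₁) (hc₂ : 0 < c₂)
    (hc : c₁ + c₂ ≤ Real.sqrt 2)
    (ρx : ℝ) (hρx : 0 ≤ ρx)
    (γ₀ : ℝ)
    (hγ₀ : γ₀ = 2 * Real.sqrt (1 + ρx) /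
      ((c₁ + c₂) * Real.sqrt (4 - (c₁ + c₂) ^ 2)))
    (n : ℕ) (hn : 1 ≤ n)
    (ω ζ : ℝ) (hω : ω = (n : ℝ) ^ 2) (hζ : ζ = (c₁ * ω⁻¹ + c₂ * ω) / 2)
    (w : ℝ → ℝ) (hw : ContinuousOn w (Ici 0))
    (z z' z'' : ℝ → ℝ)
    (hz0 : z 0 = 0) (hz'0 : z' 0 = 0)
    (hz : ∀ t ∈ Ici (0 : ℝ), HasDerivWithinAt z (z' t) (Ici 0) t)
    (hz' : ∀ t ∈ Ici (0 : ℝ), HasDerivWithinAt z' (z'' t) (Ici 0) t)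
    (hz'' : ContinuousOn z'' (Ici 0))
    (hode : ∀ t ∈ Ici (0 : ℝ), z'' t + 2 * ζ * ω * z' t + ω ^ 2 * z t = w t) :
    ∀ T ≥ (0 : ℝ),
      ∫ t in (0 : ℝ)..T, ((1 + ρx * ω ^ 2) * (z t) ^ 2 - γ₀ ^ 2 * (w t) ^ 2) ≤ 0 :=
  stmt_2_general c₁ c₂ hc₁ hc₂ hc ρx hρx γ₀ hγ₀ n hn ω ζ hω hζ w z z' z'' hz0 hz'0 hz hz' hz'' hode
end

section
/- Let N < M′ be positive integers, c₁ > 0, c₂ > 0, ρₓ ≥ 0, ρᵤ ≥ 0, γ > 0, and 0 < x_L < x_R < π. For n ≥ 1 put ωₙ = n², ζₙ = (c₁ωₙ⁻¹ + c₂ωₙ)/2, bₙ = n√(2/π)(cos(n x_R) − cos(n x_L)). Define Ω = diag(ω₁,…,ω_N), the 2N×2N matrix A = [[0_N, I_N],[−Ω², −(c₁I_N + c₂Ω²)]], B = (0,…,0,b₁,…,b_N)ᵀ ∈ ℝ^{2N}, E = [0_N; I_N] ∈ ℝ^{2N×N}, and Q = diag(1+ρₓω₁²,…,1+ρₓω_N²,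 0,…,0) ∈ ℝ^{2N×2N}. Assume: (i) there is ρ_∞ > 0 and a symmetric positive definite P ∈ ℝ^{2N×2N} satisfying PA + AᵀP − P(B R⁻¹ Bᵀ − γ⁻² E Eᵀ)P + Q = 0 with R := ρᵤ + ρ_∞; (ii) for each n with N < n ≤ M′ there are ρₙ > 0 and a symmetric positive definite Pₙ ∈ ℝ^{2×2} satisfying Pₙ Aₙ + Aₙᵀ Pₙ + γ⁻² Pₙ [[0,0],[0, 1 + γ² bₙ²/ρₙ]] Pₙ + [[1+ρₓωₙ², 0],[0, 0]] = 0, where Aₙ = [[0,1],[−ωₙ², −2ζₙωₙ]]; (iii) Σ_{n=N+1}^{M′} ρₙ ≤ ρ_∞. Let w₁,…,w_{M′} : [0,∞) → ℝ be continuous and let z₁,…,z_{M′} : [0,∞) → ℝ be twice continuously differentiable with zₙ(0) = zₙ'(0) = 0 and z̈ₙ(t) + 2ζₙωₙ żₙ(t) + ωₙ² zₙ(t) = bₙ u(t) + wₙ(t), where u(t) := −R⁻¹ Bᵀ P z^N(t) and z^N(t) := (z₁(t),…,z_N(t), ż₁(t),…,ż_N(t))ᵀ. Then for every T ≥ 0,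 ∫₀ᵀ [ Σ_{n=1}^{M′} (1+ρₓωₙ²) zₙ(t)² + ρᵤ u(t)² − γ² Σ_{n=1}^{M′} wₙ(t)² ] dt ≤ 0. -/
/-!
The storage function `V = (zᴺ)ᵀ P zᴺ + ∑_{N < n ≤ M'} xₙᵀ Pₙ xₙ`, with `xₙ = (zₙ, żₙ)`,
certifies the bound. Along trajectories, the design Riccati equation and the feedback
`u = -R⁻¹ Bᵀ P zᴺ` give `d/dt (zᴺ)ᵀ P zᴺ ≤ -(zᴺ)ᵀ Q zᴺ - R u² + γ² |w|²`, and each residual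
Riccati equation, in which `u` enters as a disturbance of gain `ρₙ`, gives
`d/dt xₙᵀ Pₙ xₙ ≤ -(1 + ρₓ ωₙ²) zₙ² + ρₙ u² + γ² wₙ²`. As `R = ρᵤ + ρ_∞` and `∑ ρₙ ≤ ρ_∞`,
the residual terms `ρₙ u²` are absorbed and `V̇` plus the cost integrand is nonpositive;
integrating from `V 0 = 0` and using `V ≥ 0` gives the claim.
-/

open Matrix Set

section QuadraticForm

variable {ι : Type*} [Fintype ι]

theorem dotProduct_mulVec_comm_of_isSymm {P : Matrix ι ι ℝ} (hP : P.IsSymm) (x y : ι → ℝ) :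
    x ⬝ᵥ P *ᵥ y = y ⬝ᵥ P *ᵥ x := by
  rw [dotProduct_mulVec, ← mulVec_transpose, hP.eq, dotProduct_comm]

theorem HasDerivWithinAt.dotProduct_mulVec_self {P : Matrix ι ι ℝ} (hP : P.IsSymm)
    {x : ℝ → ι → ℝ} {x' : ι → ℝ} {s : Set ℝ} {t : ℝ} (hx : HasDerivWithinAt x x' s t) :
    HasDerivWithinAt (fun τ ↦ x τ ⬝ᵥ P *ᵥ x τ) (2 * (x' ⬝ᵥ P *ᵥ x t)) s t := by
  have hxi := hasDerivWithinAt_pi.1 hx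
  have h : HasDerivWithinAt (fun τ ↦ ∑ i, x τ i * ∑ j, P i j * x τ j)
      (∑ i, (x' i * ∑ j, P i j * x t j + x t i * ∑ j, P i j * x' j)) s t :=
    .fun_sum fun i _ ↦ (hxi i).mul (.fun_sum fun j _ ↦ (hxi j).const_mul _)
  refine h.congr_deriv ?_
  rw [Finset.sum_add_distrib, two_mul]
  congr 1
  exact dotProduct_mulVec_comm_of_isSymm hP (x t) x'

theorem two_mul_dotProduct_mulVec_eq_of_riccati {P A S Q : Matrix ι ι ℝ} (hP : P.IsSymm)
    (hARE : P * A + Aᵀ * P + P * S * P + Q = 0) (x v : ι → ℝ) :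
    2 * ((A *ᵥ x + v) ⬝ᵥ P *ᵥ x)
      = -(x ⬝ᵥ Q *ᵥ x) - (P *ᵥ x) ⬝ᵥ S *ᵥ (P *ᵥ x) + 2 * (v ⬝ᵥ P *ᵥ x) := by
  have h := congrArg (fun M ↦ x ⬝ᵥ M *ᵥ x) hARE
  simp only [add_mulVec, dotProduct_add, ← mulVec_mulVec, zero_mulVec, dotProduct_zero] at h
  have hA : x ⬝ᵥ Aᵀ *ᵥ (P *ᵥ x) = A *ᵥ x ⬝ᵥ P *ᵥ x := by
    rw [dotProduct_mulVec, vecMul_transpose, ← dotProduct_mulVec_comm_of_isSymm hP]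
  have hSP : x ⬝ᵥ P *ᵥ (S *ᵥ P *ᵥ x) = (P *ᵥ x) ⬝ᵥ S *ᵥ (P *ᵥ x) := by
    rw [dotProduct_mulVec_comm_of_isSymm hP, dotProduct_comm]
  rw [hA, dotProduct_mulVec_comm_of_isSymm hP x (A *ᵥ x), hSP] at h
  rw [add_dotProduct]
  linarith

theorem two_mul_dotProduct_le_add_mul_dotProduct {r : ℝ} (hr : 0 < r) (a b : ι → ℝ) :
    2 * (a ⬝ᵥ b) ≤ r * (a ⬝ᵥ a) + r⁻¹ * (b ⬝ᵥ b) := by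
  simp only [dotProduct, Finset.mul_sum, ← Finset.sum_add_distrib]
  exact Finset.sum_le_sum fun i _ ↦ by
    simpa [sq, mul_assoc] using two_mul_le_add_mul_sq (a := a i) (b := b i) hr

theorem two_mul_dotProduct_mulVec_le_of_feedback {κ : Type*} [Fintype κ]
    {P A Q : Matrix ι ι ℝ} {B : ι → ℝ} {E : Matrix ι κ ℝ} {R γ : ℝ} (hγ : 0 < γ)
    (hP : P.IsSymm)
    (hARE : P * A + Aᵀ * P - P * (R⁻¹ • vecMulVec B B - (γ ^ 2)⁻¹ • (E * Eᵀ)) * P + Q = 0)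
    (x : ι → ℝ) (w : κ → ℝ) {u : ℝ} (hu : u = -(R⁻¹ * (B ⬝ᵥ P *ᵥ x))) :
    2 * ((A *ᵥ x + u • B + E *ᵥ w) ⬝ᵥ P *ᵥ x)
      ≤ -(x ⬝ᵥ Q *ᵥ x) - R * u ^ 2 + γ ^ 2 * (w ⬝ᵥ w) := by
  have hARE' : P * A + Aᵀ * P + P * -(R⁻¹ • vecMulVec B B - (γ ^ 2)⁻¹ • (E * Eᵀ)) * P + Q = 0 := by
    rw [Matrix.mul_neg, Matrix.neg_mul, ← sub_eq_add_neg]; exact hARE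
  rw [add_assoc, two_mul_dotProduct_mulVec_eq_of_riccati hP hARE']
  set g := Eᵀ *ᵥ (P *ᵥ x)
  have hE : E *ᵥ w ⬝ᵥ P *ᵥ x = w ⬝ᵥ g := by
    rw [dotProduct_comm, dotProduct_mulVec, ← mulVec_transpose, dotProduct_comm]
  have hS : (P *ᵥ x) ⬝ᵥ -(R⁻¹ • vecMulVec B B - (γ ^ 2)⁻¹ • (E * Eᵀ)) *ᵥ (P *ᵥ x)
      = -(R⁻¹ * (B ⬝ᵥ P *ᵥ x) ^ 2) + (γ ^ 2)⁻¹ * (g ⬝ᵥ g) := by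
    rw [neg_mulVec, sub_mulVec, smul_mulVec, smul_mulVec, ← mulVec_mulVec, dotProduct_neg,
      dotProduct_sub, dotProduct_smul, dotProduct_smul, dotProduct_mulVec _ (vecMulVec B B),
      vecMul_vecMulVec, dotProduct_mulVec _ E, ← mulVec_transpose, smul_dotProduct,
      dotProduct_comm (P *ᵥ x) B]
    simp only [smul_eq_mul, g]
    ring
  have hw := two_mul_dotProduct_le_add_mul_dotProduct (pow_pos hγ 2) w g
  -- also true for `R = 0`, where `R⁻¹ = 0`
  have hR : R * R⁻¹ * R⁻¹ = R⁻¹ := by simpa using inv_mul_mul_self R⁻¹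
  rw [hS, add_dotProduct, smul_dotProduct, hE, smul_eq_mul, hu]
  linear_combination hw + (B ⬝ᵥ P *ᵥ x) ^ 2 * hR

theorem two_mul_dotProduct_mulVec_le_of_boundedReal {P A Q : Matrix ι ι ℝ} (e : ι → ℝ)
    {b ρ γ : ℝ} (hρ : 0 < ρ) (hγ : 0 < γ) (hP : P.IsSymm)
    (hARE : P * A + Aᵀ * P + (γ ^ 2)⁻¹ • (P * ((1 + γ ^ 2 * b ^ 2 / ρ) • vecMulVec e e) * P)
      + Q = 0)
    (x : ι → ℝ) (u w : ℝ) :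
    2 * ((A *ᵥ x + (b * u + w) • e) ⬝ᵥ P *ᵥ x)
      ≤ -(x ⬝ᵥ Q *ᵥ x) + ρ * u ^ 2 + γ ^ 2 * w ^ 2 := by
  rw [← Matrix.smul_mul, ← Matrix.mul_smul] at hARE
  rw [two_mul_dotProduct_mulVec_eq_of_riccati hP hARE, smul_mulVec, smul_mulVec, dotProduct_smul,
    dotProduct_smul, dotProduct_mulVec _ (vecMulVec e e), vecMul_vecMulVec, smul_dotProduct,
    dotProduct_comm (P *ᵥ x) e, smul_dotProduct]
  set p := e ⬝ᵥ P *ᵥ x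
  simp only [smul_eq_mul]
  have hu := two_mul_le_add_mul_sq (a := u) (b := b * p) hρ
  have hw := two_mul_le_add_mul_sq (a := w) (b := p) (pow_pos hγ 2)
  have hγ' : (γ ^ 2)⁻¹ * γ ^ 2 = 1 := inv_mul_cancel₀ (pow_pos hγ 2).ne'
  linear_combination hu + hw - (b ^ 2 / ρ * p ^ 2) * hγ'

end QuadraticForm

theorem sumElim_dotProduct_fromBlocks_diagonal_mulVec {m : Type*} [Fintype m] [DecidableEq m]
    (d q p : m → ℝ) :
    Sum.elim q p ⬝ᵥ fromBlocks (diagonal d) 0 0 0 *ᵥ Sum.elim q p = ∑ i, d i * q i ^ 2 := by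
  rw [fromBlocks_mulVec]
  simp only [dotProduct, Fintype.sum_sum_type, Sum.elim_comp_inl, Sum.elim_comp_inr, Sum.elim_inl,
    Sum.elim_inr, zero_mulVec, mulVec_diagonal, Pi.zero_apply, add_zero, mul_zero,
    Finset.sum_const_zero]
  exact Finset.sum_congr rfl fun i _ ↦ by ring


theorem two_mul_dotProduct_mulVec_le_of_boundedReal_fin_two {P A : Matrix (Fin 2) (Fin 2) ℝ}
    {q b ρ γ : ℝ} (hρ : 0 < ρ) (hγ : 0 < γ) (hP : P.IsSymm)
    (hARE : P * A + Aᵀ * P + (γ ^ 2)⁻¹ • (P * !![0, 0; 0, 1 + γ ^ 2 * b ^ 2 / ρ] * P)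
      + !![q, 0; 0, 0] = 0)
    (z z' u w : ℝ) :
    2 * ((A *ᵥ ![z, z'] + (b * u + w) • ![0, 1]) ⬝ᵥ P *ᵥ ![z, z'])
      ≤ -(q * z ^ 2) + ρ * u ^ 2 + γ ^ 2 * w ^ 2 := by
  have hD : !![0, 0; 0, 1 + γ ^ 2 * b ^ 2 / ρ]
      = (1 + γ ^ 2 * b ^ 2 / ρ) • vecMulVec ![0, 1] ![0, 1] := by
    ext i j; fin_cases i <;> fin_cases j <;> simp
  have hQ : ![z, z'] ⬝ᵥ !![q, 0; 0, 0] *ᵥ ![z, z'] = q * z ^ 2 := by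
    simp only [dotProduct, Fin.sum_univ_two, Fin.isValue, mulVec_cons, mulVec_empty, Pi.add_apply,
      Pi.smul_apply, Function.comp_apply, smul_eq_mul, cons_val_zero, cons_val_one,
      cons_val_fin_one, head_cons, tail_cons, mul_zero, add_zero]
    ring
  rw [hD] at hARE
  simpa only [hQ] using two_mul_dotProduct_mulVec_le_of_boundedReal _ hρ hγ hP hARE ![z, z'] u w

theorem hasDerivWithinAt_sumElim_of_secondOrder {m : Type*} [Fintype m] [DecidableEq m]
    {K C : Matrix m m ℝ} {q p : ℝ → m → ℝ} {a f : m → ℝ} {s : Set ℝ} {t : ℝ}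
    (hq : HasDerivWithinAt q (p t) s t) (hp : HasDerivWithinAt p a s t)
    (hode : a + C *ᵥ p t + K *ᵥ q t = f) :
    HasDerivWithinAt (fun τ ↦ Sum.elim (q τ) (p τ))
      (fromBlocks 0 1 (-K) (-C) *ᵥ Sum.elim (q t) (p t) + Sum.elim (0 : m → ℝ) f) s t := by
  have hval : fromBlocks 0 1 (-K) (-C) *ᵥ Sum.elim (q t) (p t) + Sum.elim (0 : m → ℝ) f
      = Sum.elim (p t) a := by
    rw [fromBlocks_mulVec, ← hode]
    ext (i | i) <;> simp only [Sum.elim_comp_inl, Sum.elim_comp_inr, zero_mulVec, one_mulVec,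
      neg_mulVec, Pi.add_apply, Pi.neg_apply, Pi.zero_apply, Sum.elim_inl, Sum.elim_inr, zero_add,
      add_zero]
    ring
  rw [hval]
  refine hasDerivWithinAt_pi.2 fun i ↦ ?_
  rcases i with i | i
  · exact hasDerivWithinAt_pi.1 hq i
  · exact hasDerivWithinAt_pi.1 hp i


theorem hasDerivWithinAt_sumElim_of_modal {m : Type*} [Fintype m] [DecidableEq m]
    {c₁ c₂ : ℝ} {ω ζ f : m → ℝ} (hω : ∀ i, ω i ≠ 0)
    (hζ : ∀ i, ζ i = (c₁ * (ω i)⁻¹ + c₂ * ω i) / 2) {z z' z'' : m → ℝ → ℝ}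
    {s : Set ℝ} {t : ℝ} (hz : ∀ i, HasDerivWithinAt (z i) (z' i t) s t)
    (hz' : ∀ i, HasDerivWithinAt (z' i) (z'' i t) s t)
    (hode : ∀ i, z'' i t + 2 * ζ i * ω i * z' i t + ω i ^ 2 * z i t = f i) :
    HasDerivWithinAt (fun τ ↦ Sum.elim (fun i ↦ z i τ) (fun i ↦ z' i τ))
      (fromBlocks 0 1 (-diagonal fun i ↦ ω i ^ 2) (-(c₁ • 1 + c₂ • diagonal fun i ↦ ω i ^ 2))
          *ᵥ Sum.elim (fun i ↦ z i t) (fun i ↦ z' i t) + Sum.elim (0 : m → ℝ) f) s t := by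
  refine hasDerivWithinAt_sumElim_of_secondOrder (hasDerivWithinAt_pi.2 hz)
    (hasDerivWithinAt_pi.2 hz') ?_
  ext i
  have hdamp : 2 * ζ i * ω i = c₁ + c₂ * ω i ^ 2 := by
    rw [hζ]; field_simp [hω i]
  simp only [add_mulVec, smul_mulVec, one_mulVec, mulVec_diagonal, Pi.add_apply, Pi.smul_apply,
    smul_eq_mul]
  linear_combination hode i - z' i t * hdamp


theorem hasDerivWithinAt_vecCons_of_secondOrder {q p : ℝ → ℝ} {a k d f : ℝ} {s : Set ℝ} {t : ℝ}
    (hq : HasDerivWithinAt q (p t) s t) (hp : HasDerivWithinAt p a s t)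
    (hode : a + d * p t + k * q t = f) :
    HasDerivWithinAt (fun τ ↦ ![q τ, p τ]) (!![0, 1; -k, -d] *ᵥ ![q t, p t] + f • ![0, 1]) s t := by
  have hval : !![0, 1; -k, -d] *ᵥ ![q t, p t] + f • ![0, 1] = ![p t, a] := by
    rw [← hode]
    ext i
    fin_cases i <;> simp only [Fin.zero_eta, Fin.mk_one, Fin.isValue, mulVec_cons, mulVec_empty,
      smul_cons, smul_eq_mul, Matrix.smul_empty, Pi.add_apply, Pi.smul_apply, Function.comp_apply,
      cons_val_zero, cons_val_one, cons_val_fin_one, head_cons, tail_cons, mul_zero, mul_one,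
      mul_neg, add_zero, zero_add]
    ring
  rw [hval]
  refine hasDerivWithinAt_pi.2 fun i ↦ ?_
  fin_cases i
  · exact hq
  · exact hp


theorem intervalIntegral_nonpos_of_dissipation {f V V' : ℝ → ℝ} {T : ℝ} (hT : 0 ≤ T)
    (hf : MeasureTheory.IntegrableOn f (Icc 0 T))
    (hV : ∀ t ∈ Ici (0 : ℝ), HasDerivWithinAt V (V' t) (Ici 0) t)
    (hV0 : V 0 = 0) (hVT : 0 ≤ V T) (hdiss : ∀ t ∈ Ioo 0 T, f t + V' t ≤ 0) :
    ∫ t in (0 : ℝ)..T, f t ≤ 0 := by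
  have hcont : ContinuousOn (fun t ↦ -V t) (Icc 0 T) := fun t ht ↦
    ((hV t ht.1).continuousWithinAt.mono Icc_subset_Ici_self).neg
  have h := intervalIntegral.integral_le_sub_of_hasDeriv_right_of_le hT hcont
    (fun t ht ↦ ((hV t ht.1.le).mono (Ioi_subset_Ici ht.1.le)).neg) hf
    (fun t ht ↦ by linarith [hdiss t ht])
  linarith


theorem Finset.sum_fin_add_one_eq_sum_Ioc {M : Type*} [AddCommMonoid M] (f : ℕ → M) (N : ℕ) :
    ∑ i : Fin N, f (i + 1) = ∑ n ∈ Ioc 0 N, f n := by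
  induction N with
  | zero => simp
  | succ N ih => rw [Fin.sum_univ_castSucc, sum_Ioc_succ_top N.zero_le, ← ih]; rfl


theorem Finset.sum_Icc_one_eq_sum_fin_add_sum_Ioc {M : Type*} [AddCommMonoid M] (f : ℕ → M)
    {N M' : ℕ} (h : N ≤ M') :
    ∑ n ∈ Icc 1 M', f n = ∑ i : Fin N, f (i + 1) + ∑ n ∈ Ioc N M', f n := by
  rw [sum_fin_add_one_eq_sum_Ioc, sum_Ioc_consecutive f N.zero_le h]
  rfl


theorem stmt_3_general (N M' : ℕ) (hNM : N < M')
    (c₁ c₂ : ℝ)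
    (ρx ρu : ℝ)
    (γ : ℝ) (hγ : 0 < γ)
    (ω ζ b : ℕ → ℝ)
    (hω : ∀ n, ω n = (n : ℝ) ^ 2)
    (hζ : ∀ n, ζ n = (c₁ * (ω n)⁻¹ + c₂ * ω n) / 2)
    (A : Matrix (Fin N ⊕ Fin N) (Fin N ⊕ Fin N) ℝ)
    (hA : A = Matrix.fromBlocks 0 1
      (-(Matrix.diagonal fun i : Fin N => (ω ((i : ℕ) + 1)) ^ 2))
      (-(c₁ • (1 : Matrix (Fin N) (Fin N) ℝ)
         + c₂ • Matrix.diagonal fun i : Fin N => (ω ((i : ℕ) + 1)) ^ 2)))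
    (B : (Fin N ⊕ Fin N) → ℝ)
    (hB : B = Sum.elim (fun _ => (0 : ℝ)) (fun i : Fin N => b ((i : ℕ) + 1)))
    (E : Matrix (Fin N ⊕ Fin N) (Fin N) ℝ)
    (hE : E = Sum.elim (fun _ _ => (0 : ℝ)) (fun i j => if i = j then 1 else 0))
    (Q : Matrix (Fin N ⊕ Fin N) (Fin N ⊕ Fin N) ℝ)
    (hQ : Q = Matrix.fromBlocks
      (Matrix.diagonal fun i : Fin N => 1 + ρx * (ω ((i : ℕ) + 1)) ^ 2) 0 0 0)
    -- (i) the design Riccati equation for the first N modes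
    (ρinf : ℝ) (R : ℝ) (hRdef : R = ρu + ρinf)
    (P : Matrix (Fin N ⊕ Fin N) (Fin N ⊕ Fin N) ℝ) (hPsymm : P.IsSymm) (hP : P.PosDef)
    (hARE : P * A + Aᵀ * P
      - P * (R⁻¹ • Matrix.vecMulVec B B - (γ ^ 2)⁻¹ • (E * Eᵀ)) * P + Q = 0)
    -- (ii) the per-mode bounded-real-lemma Riccati equations for the residue
    (ρ : ℕ → ℝ) (Pn : ℕ → Matrix (Fin 2) (Fin 2) ℝ)
    (hresidue : ∀ n, N < n → n ≤ M' → 0 < ρ n ∧ (Pn n).IsSymm ∧ (Pn n).PosDef ∧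
      Pn n * !![0, 1; -(ω n) ^ 2, -(2 * ζ n * ω n)]
      + (!![0, 1; -(ω n) ^ 2, -(2 * ζ n * ω n)])ᵀ * Pn n
      + (γ ^ 2)⁻¹ • (Pn n * !![0, 0; 0, 1 + γ ^ 2 * (b n) ^ 2 / ρ n] * Pn n)
      + !![1 + ρx * (ω n) ^ 2, 0; 0, 0] = 0)
    -- (iii) ρ_∞ dominates the sum of the residual gains
    (hsum : ∑ n ∈ Finset.Ioc N M', ρ n ≤ ρinf)
    -- the closed-loop truncated modal dynamics
    (w : ℕ → ℝ → ℝ) (hw : ∀ n ∈ Finset.Icc 1 M', ContinuousOn (w n) (Ici 0))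
    (z z' z'' : ℕ → ℝ → ℝ)
    (zN : ℝ → (Fin N ⊕ Fin N) → ℝ)
    (hzN : ∀ t, zN t = Sum.elim (fun i : Fin N => z ((i : ℕ) + 1) t) (fun i : Fin N => z' ((i : ℕ) + 1) t))
    (u : ℝ → ℝ)
    (hu : ∀ t, u t = -(R⁻¹ * (B ⬝ᵥ P.mulVec (zN t))))
    (hzero : ∀ n ∈ Finset.Icc 1 M', z n 0 = 0 ∧ z' n 0 = 0)
    (hz : ∀ n ∈ Finset.Icc 1 M', ∀ t ∈ Ici (0 : ℝ),
      HasDerivWithinAt (z n) (z' n t) (Ici 0) t)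
    (hz' : ∀ n ∈ Finset.Icc 1 M', ∀ t ∈ Ici (0 : ℝ),
      HasDerivWithinAt (z' n) (z'' n t) (Ici 0) t)
    (hode : ∀ n ∈ Finset.Icc 1 M', ∀ t ∈ Ici (0 : ℝ),
      z'' n t + 2 * ζ n * ω n * z' n t + (ω n) ^ 2 * z n t = b n * u t + w n t) :
    ∀ T ≥ (0 : ℝ),
      ∫ t in (0 : ℝ)..T,
        ((∑ n ∈ Finset.Icc 1 M', (1 + ρx * (ω n) ^ 2) * (z n t) ^ 2)
          + ρu * (u t) ^ 2
          - γ ^ 2 * ∑ n ∈ Finset.Icc 1 M', (w n t) ^ 2) ≤ 0 := by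
  intro T hT
  have hmem : ∀ i : Fin N, (i : ℕ) + 1 ∈ Finset.Icc 1 M' := fun i ↦
    Finset.mem_Icc.2 ⟨by omega, by omega⟩
  have hIoc : Finset.Ioc N M' ⊆ Finset.Icc 1 M' := fun n hn ↦ by
    simp only [Finset.mem_Ioc, Finset.mem_Icc] at hn ⊢; omega
  have hPn : ∀ n ∈ Finset.Ioc N M', _ := fun n hn ↦
    hresidue n (Finset.mem_Ioc.1 hn).1 (Finset.mem_Ioc.1 hn).2
  set wN : ℝ → Fin N → ℝ := fun t i ↦ w ((i : ℕ) + 1) t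
  set x : ℕ → ℝ → Fin 2 → ℝ := fun n t ↦ ![z n t, z' n t]
  set An : ℕ → Matrix (Fin 2) (Fin 2) ℝ := fun n ↦ !![0, 1; -(ω n) ^ 2, -(2 * ζ n * ω n)]
  have hzN' : ∀ t ∈ Ici (0 : ℝ),
      HasDerivWithinAt zN (A *ᵥ zN t + u t • B + E *ᵥ wN t) (Ici 0) t := by
    intro t ht
    obtain rfl : zN = _ := funext hzN
    have hforce : u t • B + E *ᵥ wN t
        = Sum.elim (0 : Fin N → ℝ) fun i : Fin N ↦ b ((i : ℕ) + 1) * u t + w ((i : ℕ) + 1) t := by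
      subst hB hE
      ext (i | i) <;> simp [mulVec, dotProduct, wN, mul_comm]
    rw [hA, add_assoc, hforce]
    exact hasDerivWithinAt_sumElim_of_modal (fun i ↦ by rw [hω]; positivity) (fun i ↦ hζ _)
      (fun i ↦ hz _ (hmem i) t ht) (fun i ↦ hz' _ (hmem i) t ht) (fun i ↦ hode _ (hmem i) t ht)
  have hx' : ∀ n ∈ Finset.Ioc N M', ∀ t ∈ Ici (0 : ℝ),
      HasDerivWithinAt (x n) (An n *ᵥ x n t + (b n * u t + w n t) • ![0, 1]) (Ici 0) t :=
    fun n hn t ht ↦ hasDerivWithinAt_vecCons_of_secondOrder (hz n (hIoc hn) t ht)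
      (hz' n (hIoc hn) t ht) (hode n (hIoc hn) t ht)
  have hfirst : ∀ t, 2 * ((A *ᵥ zN t + u t • B + E *ᵥ wN t) ⬝ᵥ P *ᵥ zN t)
      ≤ -∑ i : Fin N, (1 + ρx * ω ((i : ℕ) + 1) ^ 2) * z ((i : ℕ) + 1) t ^ 2 - R * u t ^ 2
        + γ ^ 2 * ∑ i : Fin N, w ((i : ℕ) + 1) t ^ 2 := fun t ↦ by
    have h := two_mul_dotProduct_mulVec_le_of_feedback hγ hPsymm hARE (zN t) (wN t) (hu t)
    rw [hQ, hzN t, sumElim_dotProduct_fromBlocks_diagonal_mulVec, ← hzN t] at h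
    convert h using 3
    simp only [dotProduct, sq, wN]
  have hres : ∀ n ∈ Finset.Ioc N M', ∀ t,
      2 * ((An n *ᵥ x n t + (b n * u t + w n t) • ![0, 1]) ⬝ᵥ Pn n *ᵥ x n t)
      ≤ -((1 + ρx * ω n ^ 2) * z n t ^ 2) + ρ n * u t ^ 2 + γ ^ 2 * w n t ^ 2 := fun n hn t ↦
    two_mul_dotProduct_mulVec_le_of_boundedReal_fin_two (hPn n hn).1 hγ (hPn n hn).2.1
      (hPn n hn).2.2.2 _ _ _ _
  have huc : ContinuousOn u (Ici 0) := by
    have hBP : Continuous fun v ↦ B ⬝ᵥ P *ᵥ v :=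
      continuous_const.dotProduct (continuous_const.matrix_mulVec continuous_id)
    rw [funext hu]
    exact ((hBP.comp_continuousOn fun t ht ↦ (hzN' t ht).continuousWithinAt).const_mul _).neg
  have hcost : ContinuousOn (fun t ↦ (∑ n ∈ Finset.Icc 1 M', (1 + ρx * ω n ^ 2) * z n t ^ 2)
      + ρu * u t ^ 2 - γ ^ 2 * ∑ n ∈ Finset.Icc 1 M', w n t ^ 2) (Ici 0) :=
    ((continuousOn_finsetSum _ fun n hn ↦ continuousOn_const.mul
      (ContinuousOn.pow (fun t ht ↦ (hz n hn t ht).continuousWithinAt) 2)).add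
      (continuousOn_const.mul (huc.pow 2))).sub
      (continuousOn_const.mul (continuousOn_finsetSum _ fun n hn ↦ (hw n hn).pow 2))
  refine intervalIntegral_nonpos_of_dissipation hT (hcost.mono Icc_subset_Ici_self).integrableOn_Icc
    (V := fun τ ↦ zN τ ⬝ᵥ P *ᵥ zN τ + ∑ n ∈ Finset.Ioc N M', x n τ ⬝ᵥ Pn n *ᵥ x n τ)
    (fun t ht ↦ ((hzN' t ht).dotProduct_mulVec_self hPsymm).add
      (.fun_sum fun n hn ↦ (hx' n hn t ht).dotProduct_mulVec_self (hPn n hn).2.1))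
    ?_ ?_ fun t _ ↦ ?_
  · have hzN0 : zN 0 = 0 := by
      rw [hzN]; ext (i | i) <;> simp [hzero _ (hmem i)]
    simp only [hzN0, zero_dotProduct, zero_add]
    exact Finset.sum_eq_zero fun n hn ↦ by simp [x, hzero n (hIoc hn)]
  · exact add_nonneg (by simpa using hP.posSemidef.dotProduct_mulVec_nonneg (zN T))
      (Finset.sum_nonneg fun n hn ↦ by
        simpa using (hPn n hn).2.2.1.posSemidef.dotProduct_mulVec_nonneg (x n T))
  · have h := Finset.sum_le_sum fun n hn ↦ hres n hn t
    have hR : R * u t ^ 2 = ρu * u t ^ 2 + ρinf * u t ^ 2 := by rw [hRdef]; ring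
    rw [Finset.sum_Icc_one_eq_sum_fin_add_sum_Ioc _ hNM.le,
      Finset.sum_Icc_one_eq_sum_fin_add_sum_Ioc _ hNM.le]
    simp only [Finset.sum_add_distrib, Finset.sum_neg_distrib, ← Finset.sum_mul,
      ← Finset.mul_sum] at h ⊢
    linarith [hfirst t, mul_le_mul_of_nonneg_right hsum (sq_nonneg (u t))]

/-- Core of Theorem 1 (spillover-free H∞ design) for a finite modal
truncation of the Euler–Bernoulli beam: the feedback designed from the
Riccati equation with control weight ρᵤ + ρ_∞ renders the H∞ cost with the
original weight ρᵤ nonpositive, where ρ_∞ dominates the residual-mode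
L² gains certified by the per-mode bounded-real-lemma Riccati equations. -/
theorem stmt_3 (N M' : ℕ) (hN : 0 < N) (hNM : N < M')
    (c₁ c₂ : ℝ) (hc₁ : 0 < c₁) (hc₂ : 0 < c₂)
    (ρx ρu : ℝ) (hρx : 0 ≤ ρx) (hρu : 0 ≤ ρu)
    (γ : ℝ) (hγ : 0 < γ)
    (xL xR : ℝ) (hxL : 0 < xL) (hLR : xL < xR) (hxR : xR < Real.pi)
    (ω ζ b : ℕ → ℝ)
    (hω : ∀ n, ω n = (n : ℝ) ^ 2)
    (hζ : ∀ n, ζ n = (c₁ * (ω n)⁻¹ + c₂ * ω n) / 2)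
    (hb : ∀ n, b n = (n : ℝ) * Real.sqrt (2 / Real.pi) *
      (Real.cos (n * xR) - Real.cos (n * xL)))
    (A : Matrix (Fin N ⊕ Fin N) (Fin N ⊕ Fin N) ℝ)
    (hA : A = Matrix.fromBlocks 0 1
      (-(Matrix.diagonal fun i : Fin N => (ω ((i : ℕ) + 1)) ^ 2))
      (-(c₁ • (1 : Matrix (Fin N) (Fin N) ℝ)
         + c₂ • Matrix.diagonal fun i : Fin N => (ω ((i : ℕ) + 1)) ^ 2)))
    (B : (Fin N ⊕ Fin N) → ℝ)
    (hB : B = Sum.elim (fun _ => (0 : ℝ)) (fun i : Fin N => b ((i : ℕ) + 1)))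
    (E : Matrix (Fin N ⊕ Fin N) (Fin N) ℝ)
    (hE : E = Sum.elim (fun _ _ => (0 : ℝ)) (fun i j => if i = j then 1 else 0))
    (Q : Matrix (Fin N ⊕ Fin N) (Fin N ⊕ Fin N) ℝ)
    (hQ : Q = Matrix.fromBlocks
      (Matrix.diagonal fun i : Fin N => 1 + ρx * (ω ((i : ℕ) + 1)) ^ 2) 0 0 0)
    -- (i) the design Riccati equation for the first N modes
    (ρinf : ℝ) (hρinf : 0 < ρinf) (R : ℝ) (hRdef : R = ρu + ρinf)
    (P : Matrix (Fin N ⊕ Fin N) (Fin N ⊕ Fin N) ℝ) (hPsymm : P.IsSymm) (hP : P.PosDef)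
    (hARE : P * A + Aᵀ * P
      - P * (R⁻¹ • Matrix.vecMulVec B B - (γ ^ 2)⁻¹ • (E * Eᵀ)) * P + Q = 0)
    -- (ii) the per-mode bounded-real-lemma Riccati equations for the residue
    (ρ : ℕ → ℝ) (Pn : ℕ → Matrix (Fin 2) (Fin 2) ℝ)
    (hresidue : ∀ n, N < n → n ≤ M' → 0 < ρ n ∧ (Pn n).IsSymm ∧ (Pn n).PosDef ∧
      Pn n * !![0, 1; -(ω n) ^ 2, -(2 * ζ n * ω n)]
      + (!![0, 1; -(ω n) ^ 2, -(2 * ζ n * ω n)])ᵀ * Pn n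
      + (γ ^ 2)⁻¹ • (Pn n * !![0, 0; 0, 1 + γ ^ 2 * (b n) ^ 2 / ρ n] * Pn n)
      + !![1 + ρx * (ω n) ^ 2, 0; 0, 0] = 0)
    -- (iii) ρ_∞ dominates the sum of the residual gains
    (hsum : ∑ n ∈ Finset.Ioc N M', ρ n ≤ ρinf)
    -- the closed-loop truncated modal dynamics
    (w : ℕ → ℝ → ℝ) (hw : ∀ n ∈ Finset.Icc 1 M', ContinuousOn (w n) (Ici 0))
    (z z' z'' : ℕ → ℝ → ℝ)
    (zN : ℝ → (Fin N ⊕ Fin N) → ℝ)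
    (hzN : ∀ t, zN t = Sum.elim (fun i : Fin N => z ((i : ℕ) + 1) t) (fun i : Fin N => z' ((i : ℕ) + 1) t))
    (u : ℝ → ℝ)
    (hu : ∀ t, u t = -(R⁻¹ * (B ⬝ᵥ P.mulVec (zN t))))
    (hzero : ∀ n ∈ Finset.Icc 1 M', z n 0 = 0 ∧ z' n 0 = 0)
    (hz : ∀ n ∈ Finset.Icc 1 M', ∀ t ∈ Ici (0 : ℝ),
      HasDerivWithinAt (z n) (z' n t) (Ici 0) t)
    (hz' : ∀ n ∈ Finset.Icc 1 M', ∀ t ∈ Ici (0 : ℝ),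
      HasDerivWithinAt (z' n) (z'' n t) (Ici 0) t)
    (hz'' : ∀ n ∈ Finset.Icc 1 M', ContinuousOn (z'' n) (Ici 0))
    (hode : ∀ n ∈ Finset.Icc 1 M', ∀ t ∈ Ici (0 : ℝ),
      z'' n t + 2 * ζ n * ω n * z' n t + (ω n) ^ 2 * z n t = b n * u t + w n t) :
    ∀ T ≥ (0 : ℝ),
      ∫ t in (0 : ℝ)..T,
        ((∑ n ∈ Finset.Icc 1 M', (1 + ρx * (ω n) ^ 2) * (z n t) ^ 2)
          + ρu * (u t) ^ 2
          - γ ^ 2 * ∑ n ∈ Finset.Icc 1 M', (w n t) ^ 2) ≤ 0 :=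
  stmt_3_general N M' hNM c₁ c₂ ρx ρu γ hγ ω ζ b hω hζ A hA B hB E hE Q hQ ρinf R hRdef P hPsymm hP
    hARE ρ Pn hresidue hsum w hw z z' z'' zN hzN u hu hzero hz hz' hode
end

section
/- Let ω > 0, ρₓ ≥ 0, and ζ > 0 with 2ζ² ≤ 1. Put q = 1 + ρₓω² and α = 4ω⁴ζ²(1−ζ²)/q, and define A = [[0,1],[−ω², −2ζω]] and P = (2ζω/α)·[[ω², ζω],[ζω, 1]]. Then P is symmetric positive definite and satisfies the algebraic Riccati equation P A + Aᵀ P + α · P [[0,0],[0,1]] P + [[q,0],[0,0]] = 0. -/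
/-!
The matrix `M = [[ω², ζω], [ζω, 1]]` is positive definite because its determinant is
`ω²(1 - ζ²) > 0`. Writing `c = 2ζω/α`, the residual `c (MA + AᵀM) + α c² M e₂e₂ᵀ M`
vanishes except in its top-left entry, since `α c = 2ζω`; that entry is
`-4ω⁴ζ²(1 - ζ²)/α`, which is `-q` exactly for the maximal `α`.
-/

open Matrix

theorem Matrix.posDef_fin_two_of_pos_of_det_pos {a b d : ℝ} (ha : 0 < a)
    (hdet : 0 < a * d - b ^ 2) : (!![a, b; b, d]).PosDef := by
  refine posDef_iff_dotProduct_mulVec.mpr ⟨?_, fun x hx => ?_⟩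
  · ext i j
    fin_cases i <;> fin_cases j <;> rfl
  · have hx' : x 0 ≠ 0 ∨ x 1 ≠ 0 := by
      by_contra! h
      exact hx (funext fun i => by fin_cases i <;> simp [h.1, h.2])
    have hquad : a * (star x ⬝ᵥ (!![a, b; b, d] *ᵥ x))
        = (a * x 0 + b * x 1) ^ 2 + (a * d - b ^ 2) * x 1 ^ 2 := by
      simp only [star_trivial, dotProduct, mulVec, Fin.sum_univ_two, of_apply, cons_val',
        cons_val_zero, cons_val_one, cons_val_fin_one, empty_val']
      ring
    have hpos : 0 < (a * x 0 + b * x 1) ^ 2 + (a * d - b ^ 2) * x 1 ^ 2 := by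
      rcases eq_or_ne (x 1) 0 with h1 | h1
      · have h0 : x 0 ≠ 0 := hx'.resolve_right (not_not.mpr h1)
        have : 0 < (a * x 0) ^ 2 := by positivity
        simpa [h1] using this
      · positivity
    exact pos_of_mul_pos_right (hquad ▸ hpos) ha.le

theorem riccati_residual_damped_mode (ω ζ α : ℝ) (hα : α ≠ 0) :
    let A : Matrix (Fin 2) (Fin 2) ℝ := !![0, 1; -ω ^ 2, -(2 * ζ * ω)]
    let P : Matrix (Fin 2) (Fin 2) ℝ := (2 * ζ * ω / α) • !![ω ^ 2, ζ * ω; ζ * ω, 1]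
    P * A + Aᵀ * P + α • (P * !![0, 0; 0, 1] * P)
      = !![-(4 * ω ^ 4 * ζ ^ 2 * (1 - ζ ^ 2) / α), 0; 0, 0] := by
  intro A P
  ext i j
  fin_cases i <;> fin_cases j <;>
    · simp only [A, P, Fin.zero_eta, Fin.mk_one, Matrix.add_apply, Matrix.smul_apply,
        mul_apply, transpose_apply, Fin.sum_univ_two, of_apply, cons_val', cons_val_zero,
        cons_val_one, cons_val_fin_one, empty_val', smul_eq_mul]
      field_simp
      ring

/-- Appendix A, underdamped case 2ζ² ≤ 1: explicit positive definite solution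
of the per-mode bounded-real-lemma Riccati equation with the maximal α. -/
theorem stmt_4 (ω ρx ζ : ℝ) (hω : 0 < ω) (hρx : 0 ≤ ρx) (hζ : 0 < ζ)
    (hζ2 : 2 * ζ ^ 2 ≤ 1)
    (q α : ℝ) (hq : q = 1 + ρx * ω ^ 2) (hα : α = 4 * ω ^ 4 * ζ ^ 2 * (1 - ζ ^ 2) / q)
    (A P : Matrix (Fin 2) (Fin 2) ℝ)
    (hA : A = !![0, 1; -ω ^ 2, -(2 * ζ * ω)])
    (hP : P = (2 * ζ * ω / α) • !![ω ^ 2, ζ * ω; ζ * ω, 1]) :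
    P.IsSymm ∧ P.PosDef ∧
      P * A + Aᵀ * P + α • (P * !![0, 0; 0, 1] * P) + !![q, 0; 0, 0] = 0 := by
  have hζ1 : 0 < 1 - ζ ^ 2 := by nlinarith
  have hq0 : 0 < q := by rw [hq]; positivity
  have hα0 : 0 < α := by rw [hα]; positivity
  have hαq : 4 * ω ^ 4 * ζ ^ 2 * (1 - ζ ^ 2) / α = q := by
    rw [hα, div_div_cancel₀ (by positivity)]
  have hM : (!![ω ^ 2, ζ * ω; ζ * ω, 1]).PosDef :=
    posDef_fin_two_of_pos_of_det_pos (by positivity) (by nlinarith [pow_pos hω 2])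
  have hPdef : P.PosDef := hP ▸ hM.smul (by positivity)
  refine ⟨isHermitian_iff_isSymm.mp hPdef.isHermitian, hPdef, ?_⟩
  rw [hA, hP, riccati_residual_damped_mode ω ζ α hα0.ne', hαq]
  ext i j
  fin_cases i <;> fin_cases j <;> simp
end

section
/- Let ω > 0, ζ > 0, q > 0, α > 0, and A = [[0,1],[−ω², −2ζω]]. If there exists a real symmetric 2×2 matrix P = [[p₁,p₂],[p₂,p₃]] satisfying P A + Aᵀ P + α · P [[0,0],[0,1]] P + [[q,0],[0,0]] = 0, then ω⁴ ≥ α q and 2ζ²ω² ≥ ω² − √(ω⁴ − α q). Consequently, if 2ζ² ≤ 1 then necessarily α ≤ 4ω⁴ζ²(1−ζ²)/q, and in any case α ≤ ω⁴/q. -/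
open Matrix

/-- Appendix A: feasibility conditions for the 2×2 bounded-real-lemma Riccati
equation of one residual mode, yielding the maximal admissible α. -/
theorem stmt_6 (ω ζ q α : ℝ) (hω : 0 < ω) (hζ : 0 < ζ) (hq : 0 < q) (hα : 0 < α)
    (A : Matrix (Fin 2) (Fin 2) ℝ) (hA : A = !![0, 1; -ω ^ 2, -(2 * ζ * ω)])
    (p₁ p₂ p₃ : ℝ)
    (hP : !![p₁, p₂; p₂, p₃] * A + Aᵀ * !![p₁, p₂; p₂, p₃]
      + α • (!![p₁, p₂; p₂, p₃] * !![0, 0; 0, 1] * !![p₁, p₂; p₂, p₃])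
      + !![q, 0; 0, 0] = 0) :
    ω ^ 4 ≥ α * q ∧
    2 * ζ ^ 2 * ω ^ 2 ≥ ω ^ 2 - Real.sqrt (ω ^ 4 - α * q) ∧
    (2 * ζ ^ 2 ≤ 1 → α ≤ 4 * ω ^ 4 * ζ ^ 2 * (1 - ζ ^ 2) / q) ∧
    α ≤ ω ^ 4 / q := by
  subst hA
  have h00 := congrFun (congrFun hP 0) 0
  have h11 := congrFun (congrFun hP 1) 1
  simp [Matrix.mul_apply, Matrix.add_apply, Fin.sum_univ_two, Matrix.transpose_apply, Matrix.vecHead, Matrix.vecTail] at h00 h11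
  -- h00 : -(p₂ *ω²) + ... = 0 etc; convert to clean equations
  have e1 : α * p₂ ^ 2 - 2 * ω ^ 2 * p₂ + q = 0 := by ring_nf; ring_nf at h00; linarith
  have e2 : α * p₃ ^ 2 - 4 * ζ * ω * p₃ + 2 * p₂ = 0 := by ring_nf; ring_nf at h11; linarith
  have hdisc : (α * p₂ - ω ^ 2) ^ 2 = ω ^ 4 - α * q := by nlinarith [e1]
  have h1 : ω ^ 4 ≥ α * q := by nlinarith [sq_nonneg (α * p₂ - ω ^ 2)]
  have hs : Real.sqrt (ω ^ 4 - α * q) = |α * p₂ - ω ^ 2| := by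
    rw [← hdisc, Real.sqrt_sq_eq_abs]
  have hlow : ω ^ 2 - Real.sqrt (ω ^ 4 - α * q) ≤ α * p₂ := by
    rw [hs]
    rcases abs_cases (α * p₂ - ω ^ 2) with ⟨h, _⟩ | ⟨h, _⟩ <;> linarith
  have hup : α * p₂ ≤ 2 * ζ ^ 2 * ω ^ 2 := by nlinarith [sq_nonneg (α * p₃ - 2 * ζ * ω), e2]
  have h2 : 2 * ζ ^ 2 * ω ^ 2 ≥ ω ^ 2 - Real.sqrt (ω ^ 4 - α * q) := le_trans hlow hup
  refine ⟨h1, h2, ?_, ?_⟩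
  · intro hζ1
    have hsnn : Real.sqrt (ω ^ 4 - α * q) ≥ 0 := Real.sqrt_nonneg _
    have hssq : Real.sqrt (ω ^ 4 - α * q) ^ 2 = ω ^ 4 - α * q :=
      Real.sq_sqrt (by linarith)
    have hge : Real.sqrt (ω ^ 4 - α * q) ≥ ω ^ 2 * (1 - 2 * ζ ^ 2) := by nlinarith
    have hnn : (0:ℝ) ≤ ω ^ 2 * (1 - 2 * ζ ^ 2) := by nlinarith
    have hsq2 : (ω ^ 2 * (1 - 2 * ζ ^ 2)) ^ 2 ≤ Real.sqrt (ω ^ 4 - α * q) ^ 2 :=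
      pow_le_pow_left₀ hnn hge 2
    have : α * q ≤ 4 * ω ^ 4 * ζ ^ 2 * (1 - ζ ^ 2) := by nlinarith [hsq2, hssq]
    rw [le_div_iff₀ hq]
    linarith
  · rw [le_div_iff₀ hq]; linarith
end

section
/- Let c₁ > 0, c₂ > 0 with c₁ + c₂ ≤ √2, let ρₓ ≥ 0, γ > 0, 0 < x_L < x_R < π, and let N ≥ 1 be an integer. For n ≥ 1 put ωₙ = n², ζₙ = (c₁ωₙ⁻¹ + c₂ωₙ)/2, bₙ = n√(2/π)(cos(n x_R) − cos(n x_L)). Set M = max{N, ⌊ ( (1 + √(1 − 2c₁c₂)) / (√2 c₂) )^{1/2} ⌋}. Assume ω_{M+1}⁴ > (1 + ρₓω_{M+1}²)γ⁻², and for each n with N < n ≤ M assume 4ωₙ⁴ζₙ²(1−ζₙ²) > (1+ρₓωₙ²)γ⁻² if 2ζₙ² ≤ 1 and ωₙ⁴ > (1+ρₓωₙ²)γ⁻² if 2ζₙ² > 1. Define ρₙ = bₙ²(1+ρₓωₙ²)/(4ωₙ⁴ζₙ²(1−ζₙ²) − (1+ρₓωₙ²)γ⁻²) if 2ζₙ²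 ≤ 1 and ρₙ = bₙ²(1+ρₓωₙ²)/(ωₙ⁴ − (1+ρₓωₙ²)γ⁻²) if 2ζₙ² > 1, and C_M = ω_{M+1}²(1+ρₓω_{M+1}²)/(ω_{M+1}⁴ − (1+ρₓω_{M+1}²)γ⁻²). Then the series Σ_{n=N+1}^∞ ρₙ converges and Σ_{n=N+1}^∞ ρₙ ≤ Σ_{n=N+1}^{M} ρₙ + C_M [ (x_R − x_L) − Σ_{n=1}^{M} bₙ²/ωₙ² ]. -/
/-!
For `n > M` the mode is overdamped, `2 ζₙ² > 1`, because `ωₙ` lies beyond the larger root of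
`c₂ ω² - √2 ω + c₁`. Then `ρₙ = (bₙ² / ωₙ²) g(ωₙ²)` with
`g(s) = s (1 + ρₓ s) / (s² - (1 + ρₓ s) γ⁻²)`, and `g` is antitone on the feasible range
`s ≥ ω_{M+1}²`, so `ρₙ ≤ C_M bₙ² / ωₙ²` with `C_M = g(ω_{M+1}²)`. Summing against
`∑ bₙ² / ωₙ² = x_R - x_L`, Parseval's identity for the indicator of `[x_L, x_R]` in the sine
basis, bounds the tail beyond `M`.
-/

open Real Finset

theorem hasSum_cos_nat_mul_div_sq {θ : ℝ} (hθ₀ : 0 ≤ θ) (hθ : θ ≤ 2 * π) :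
    HasSum (fun n : ℕ => cos (n * θ) / (n : ℝ) ^ 2) (π ^ 2 / 6 - π * θ / 2 + θ ^ 2 / 4) := by
  have hx : θ / (2 * π) ∈ Set.Icc (0 : ℝ) 1 :=
    ⟨by positivity, (div_le_one (by positivity)).2 hθ⟩
  convert hasSum_one_div_nat_pow_mul_cos one_ne_zero hx using 1
  · ext n
    rw [mul_one, one_div_mul_eq_div]
    congr 2
    field_simp
  · change _ = _ * bernoulliFun 2 _
    rw [bernoulliFun_two, mul_one, Nat.factorial_two]
    field_simp
    ring

theorem hasSum_sq_cos_sub_cos_div_sq {a c : ℝ} (ha : 0 ≤ a) (hac : a ≤ c) (hc : c ≤ π) :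
    HasSum (fun n : ℕ => (cos (n * c) - cos (n * a)) ^ 2 / (n : ℝ) ^ 2) (π * (c - a) / 2) := by
  have H := (hasSum_zeta_two.add (((hasSum_cos_nat_mul_div_sq (θ := 2 * c) (by linarith)
    (by linarith)).add (hasSum_cos_nat_mul_div_sq (θ := 2 * a) (by linarith)
    (by linarith))).div_const 2)).sub ((hasSum_cos_nat_mul_div_sq (θ := c - a) (by linarith)
    (by linarith)).add (hasSum_cos_nat_mul_div_sq (θ := c + a) (by linarith) (by linarith)))
  -- `(cos nc - cos na)² = 1 + (cos 2nc + cos 2na) / 2 - cos n(c - a) - cos n(c + a)`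
  rw [show π * (c - a) / 2 = π ^ 2 / 6 + (π ^ 2 / 6 - π * (2 * c) / 2 + (2 * c) ^ 2 / 4 +
      (π ^ 2 / 6 - π * (2 * a) / 2 + (2 * a) ^ 2 / 4)) / 2 - (π ^ 2 / 6 - π * (c - a) / 2 +
      (c - a) ^ 2 / 4 + (π ^ 2 / 6 - π * (c + a) / 2 + (c + a) ^ 2 / 4)) by ring]
  refine H.congr_fun fun n => ?_
  rw [mul_sub, mul_add, cos_sub, cos_add, mul_left_comm, mul_left_comm _ 2, cos_two_mul,
    cos_two_mul]
  ring

-- `n √(2/π) (cos nc - cos na) / n²` are, up to sign, the coefficients of the indicator of `[a, c]`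
-- in the orthonormal basis `√(2/π) sin(n x)` of `L²(0, π)`, so this is Parseval's identity.
theorem hasSum_sine_coeff_sq {a c : ℝ} (ha : 0 ≤ a) (hac : a ≤ c) (hc : c ≤ π) :
    HasSum (fun n : ℕ => (n * √(2 / π) * (cos (n * c) - cos (n * a))) ^ 2 / ((n : ℝ) ^ 2) ^ 2)
      (c - a) := by
  have h := (hasSum_sq_cos_sub_cos_div_sq ha hac hc).mul_left (2 / π)
  rw [show 2 / π * (π * (c - a) / 2) = c - a by field_simp] at h
  refine h.congr_fun fun n => ?_
  rw [mul_pow, mul_pow, sq_sqrt (by positivity)]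
  rcases eq_or_ne n 0 with rfl | hn
  · simp
  · field_simp

theorem one_lt_two_mul_sq_of_lt {c₁ c₂ X : ℝ} (hc₂ : 0 < c₂)
    (hX : (1 + √(1 - 2 * c₁ * c₂)) / (√2 * c₂) < X) :
    1 < 2 * ((c₁ * X⁻¹ + c₂ * X) / 2) ^ 2 := by
  set d := √(1 - 2 * c₁ * c₂)
  have h2 : √2 ^ 2 = 2 := sq_sqrt zero_le_two
  have hd : 1 - 2 * c₁ * c₂ ≤ d ^ 2 := (le_max_left _ _).trans_eq sq_sqrt'.symm
  have hX₀ : 0 < X := lt_trans (by positivity) hX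
  have hlin : 1 + d < √2 * c₂ * X := by
    rwa [div_lt_iff₀ (by positivity), mul_comm X] at hX
  -- `2 c₂ (c₂ X² - √2 X + c₁) = (√2 c₂ X - 1)² - (1 - 2 c₁ c₂) ≥ (√2 c₂ X - 1)² - d²`
  have hsq : 0 < (√2 * c₂ * X - 1) ^ 2 - d ^ 2 := by
    linear_combination mul_pos (by linarith : 0 < √2 * c₂ * X - 1 - d)
      (by linarith [sqrt_nonneg (1 - 2 * c₁ * c₂)] : 0 < √2 * c₂ * X - 1 + d)
  have hquad : 0 < c₂ * X ^ 2 + c₁ - √2 * X := by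
    refine pos_of_mul_pos_right (a := 2 * c₂) ?_ (by positivity)
    linear_combination hsq + hd + c₂ ^ 2 * X ^ 2 * h2
  have hsum : √2 < c₁ * X⁻¹ + c₂ * X := by
    rw [← mul_lt_mul_iff_left₀ hX₀]
    field_simp
    linarith
  nlinarith [sqrt_nonneg 2]

noncomputable def overdampedGain (ρx P s : ℝ) : ℝ := s * (1 + ρx * s) / (s ^ 2 - (1 + ρx * s) * P)

section
variable {ρx P s t : ℝ}

theorem one_add_mul_mul_lt_sq_of_le (hρx : 0 ≤ ρx) (hP : 0 ≤ P) (ht : 0 < t) (hts : t ≤ s)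
    (hfeas : (1 + ρx * t) * P < t ^ 2) : (1 + ρx * s) * P < s ^ 2 := by
  have hgrowth : t ^ 2 * (1 + ρx * s) ≤ s ^ 2 * (1 + ρx * t) := by
    nlinarith [mul_nonneg (mul_nonneg (mul_nonneg hρx ht.le) (ht.le.trans hts)) (sub_nonneg.2 hts)]
  have hs : 0 < s := ht.trans_le hts
  refine lt_of_mul_lt_mul_right (a := t ^ 2) ?_ (by positivity)
  calc (1 + ρx * s) * P * t ^ 2 = t ^ 2 * (1 + ρx * s) * P := by ring
    _ ≤ s ^ 2 * (1 + ρx * t) * P := mul_le_mul_of_nonneg_right hgrowth hP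
    _ < s ^ 2 * t ^ 2 := by rw [mul_assoc]; exact mul_lt_mul_of_pos_left hfeas (by positivity)

theorem overdampedGain_nonneg (hρx : 0 ≤ ρx) (hs : 0 ≤ s) (hfeas : (1 + ρx * s) * P < s ^ 2) :
    0 ≤ overdampedGain ρx P s :=
  div_nonneg (by positivity) (sub_pos.2 hfeas).le

theorem overdampedGain_le (hρx : 0 ≤ ρx) (hP : 0 ≤ P) (ht : 0 < t) (hts : t ≤ s)
    (hfeas : (1 + ρx * t) * P < t ^ 2) : overdampedGain ρx P s ≤ overdampedGain ρx P t := by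
  have hs := ht.trans_le hts
  rw [overdampedGain, overdampedGain,
    div_le_div_iff₀ (sub_pos.2 (one_add_mul_mul_lt_sq_of_le hρx hP ht hts hfeas)) (sub_pos.2 hfeas)]
  nlinarith [mul_nonneg (mul_nonneg hs.le ht.le) (sub_nonneg.2 hts),
    mul_nonneg (mul_nonneg (by positivity : 0 ≤ (1 + ρx * s) * (1 + ρx * t)) hP) (sub_nonneg.2 hts)]

theorem overdamped_mode_bounds {u w β : ℝ} (hρx : 0 ≤ ρx) (hP : 0 ≤ P) (hu : u ≠ 0)
    (huw : u ^ 2 ≤ w ^ 2) (hfeas : (1 + ρx * u ^ 2) * P < u ^ 4) :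
    0 ≤ β ^ 2 * (1 + ρx * w ^ 2) / (w ^ 4 - (1 + ρx * w ^ 2) * P) ∧
      β ^ 2 * (1 + ρx * w ^ 2) / (w ^ 4 - (1 + ρx * w ^ 2) * P) ≤
        u ^ 2 * (1 + ρx * u ^ 2) / (u ^ 4 - (1 + ρx * u ^ 2) * P) * (β ^ 2 / w ^ 2) := by
  have hu₂ : 0 < u ^ 2 := by positivity
  have hw : w ≠ 0 := fun h => hu₂.not_ge (by simpa [h] using huw)
  rw [show u ^ 4 = (u ^ 2) ^ 2 by ring] at hfeas ⊢
  have hgain : β ^ 2 * (1 + ρx * w ^ 2) / (w ^ 4 - (1 + ρx * w ^ 2) * P) =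
      overdampedGain ρx P (w ^ 2) * (β ^ 2 / w ^ 2) := by
    rw [overdampedGain]
    field_simp
  rw [hgain, ← overdampedGain]
  exact ⟨mul_nonneg (overdampedGain_nonneg hρx (sq_nonneg _)
      (one_add_mul_mul_lt_sq_of_le hρx hP hu₂ huw hfeas)) (by positivity),
    mul_le_mul_of_nonneg_right (overdampedGain_le hρx hP hu₂ huw hfeas) (by positivity)⟩

end

theorem sum_Ioc_add_tsum_nat_add {G : Type*} [AddCommGroup G] [TopologicalSpace G]
    [IsTopologicalAddGroup G] [T2Space G] {f : ℕ → G} {N M : ℕ} (hNM : N ≤ M)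
    (hf : Summable fun k => f (k + N + 1)) :
    ∑ n ∈ Ioc N M, f n + ∑' k, f (k + M + 1) = ∑' k, f (k + N + 1) := by
  obtain ⟨d, rfl⟩ := Nat.exists_eq_add_of_le hNM
  rw [← hf.sum_add_tsum_nat_add d, ← Ico_add_one_add_one_eq_Ioc, sum_Ico_eq_sum_range,
    show N + d + 1 - (N + 1) = d by omega]
  congr 1
  · exact sum_congr rfl fun k _ => congrArg f (by omega)
  · exact tsum_congr fun k => congrArg f (by omega)

theorem summable_and_tsum_le_of_eventually_le {f g : ℕ → ℝ} {S C : ℝ} {N M : ℕ} (hNM : N ≤ M)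
    (hg : HasSum g S) (hf₀ : ∀ n, M < n → 0 ≤ f n) (hfg : ∀ n, M < n → f n ≤ C * g n) :
    Summable (fun k => f (k + N + 1)) ∧
      ∑' k, f (k + N + 1) ≤ ∑ n ∈ Ioc N M, f n + C * (S - ∑ n ∈ range (M + 1), g n) := by
  have hgM : Summable fun k => g (k + (M + 1)) := (summable_nat_add_iff (M + 1)).2 hg.summable
  have hfM : Summable fun k => f (k + M + 1) :=
    .of_nonneg_of_le (fun k => hf₀ _ (by omega)) (fun k => hfg _ (by omega)) (hgM.mul_left C)
  have hfN : Summable fun k => f (k + N + 1) := by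
    obtain ⟨d, rfl⟩ := Nat.exists_eq_add_of_le hNM
    exact (summable_nat_add_iff d).1 (hfM.congr fun k => congrArg f (by omega))
  refine ⟨hfN, ?_⟩
  rw [← sum_Ioc_add_tsum_nat_add hNM hfN, ← hg.tsum_eq, ← hg.summable.sum_add_tsum_nat_add (M + 1),
    add_sub_cancel_left, ← tsum_mul_left]
  exact add_le_add_right (hfM.tsum_le_tsum (fun k => hfg _ (by omega)) (hgM.mul_left C)) _

theorem stmt_9_general (c₁ c₂ : ℝ) (hc₂ : 0 < c₂)
    (ρx γ : ℝ) (hρx : 0 ≤ ρx)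
    (xL xR : ℝ) (hxL : 0 < xL) (hLR : xL < xR) (hxR : xR < Real.pi)
    (N : ℕ)
    (ω ζ b : ℕ → ℝ)
    (hω : ∀ n, ω n = (n : ℝ) ^ 2)
    (hζ : ∀ n, ζ n = (c₁ * (ω n)⁻¹ + c₂ * ω n) / 2)
    (hb : ∀ n, b n = (n : ℝ) * Real.sqrt (2 / Real.pi) *
      (Real.cos (n * xR) - Real.cos (n * xL)))
    (M : ℕ)
    (hM : M = max N
      (Nat.floor (Real.sqrt ((1 + Real.sqrt (1 - 2 * c₁ * c₂)) / (Real.sqrt 2 * c₂)))))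
    (hfeasM : (ω (M + 1)) ^ 4 > (1 + ρx * (ω (M + 1)) ^ 2) * (γ ^ 2)⁻¹)
    (ρ : ℕ → ℝ)
    (hρ : ∀ n, ρ n =
      if 2 * (ζ n) ^ 2 ≤ 1 then
        (b n) ^ 2 * (1 + ρx * (ω n) ^ 2) /
          (4 * (ω n) ^ 4 * (ζ n) ^ 2 * (1 - (ζ n) ^ 2) - (1 + ρx * (ω n) ^ 2) * (γ ^ 2)⁻¹)
      else
        (b n) ^ 2 * (1 + ρx * (ω n) ^ 2) /
          ((ω n) ^ 4 - (1 + ρx * (ω n) ^ 2) * (γ ^ 2)⁻¹))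
    (CM : ℝ)
    (hCM : CM = (ω (M + 1)) ^ 2 * (1 + ρx * (ω (M + 1)) ^ 2) /
      ((ω (M + 1)) ^ 4 - (1 + ρx * (ω (M + 1)) ^ 2) * (γ ^ 2)⁻¹)) :
    Summable (fun k : ℕ => ρ (k + N + 1)) ∧
    (∑' k : ℕ, ρ (k + N + 1)) ≤
      (∑ n ∈ Finset.Ioc N M, ρ n)
        + CM * ((xR - xL) - ∑ n ∈ Finset.Icc 1 M, (b n) ^ 2 / (ω n) ^ 2) := by
  set P := (γ ^ 2)⁻¹
  have hP : 0 ≤ P := by positivity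
  have hparseval : HasSum (fun n => b n ^ 2 / ω n ^ 2) (xR - xL) := by
    simpa only [hb, hω] using hasSum_sine_coeff_sq hxL.le hLR.le hxR.le
  have hωM : ω (M + 1) ≠ 0 := by rw [hω]; positivity
  have htail : ∀ n, M < n → 0 ≤ ρ n ∧ ρ n ≤ CM * (b n ^ 2 / ω n ^ 2) := by
    intro n hn
    have hfloor : ⌊√((1 + √(1 - 2 * c₁ * c₂)) / (√2 * c₂))⌋₊ < n :=
      (le_max_right _ _).trans_lt (hM ▸ hn)
    have hover : ¬ 2 * ζ n ^ 2 ≤ 1 := by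
      rw [not_le, hζ, hω]
      exact one_lt_two_mul_sq_of_lt hc₂ (lt_sq_of_sqrt_lt (Nat.lt_of_floor_lt hfloor))
    have hle : ω (M + 1) ^ 2 ≤ ω n ^ 2 := by
      rw [hω, hω]; gcongr; exact_mod_cast hn
    rw [hρ, if_neg hover, hCM]
    exact overdamped_mode_bounds hρx hP hωM hle hfeasM
  have hb₀ : b 0 ^ 2 / ω 0 ^ 2 = 0 := by simp [hb]
  have hrange : ∑ n ∈ range (M + 1), b n ^ 2 / ω n ^ 2 = ∑ n ∈ Icc 1 M, b n ^ 2 / ω n ^ 2 := by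
    rw [range_eq_Ico, sum_eq_sum_Ico_succ_bot M.succ_pos, hb₀, zero_add, zero_add,
      Nat.succ_eq_add_one, Ico_add_one_right_eq_Icc]
  rw [← hrange]
  exact summable_and_tsum_le_of_eventually_le (hM ▸ le_max_left _ _) hparseval
    (fun n hn => (htail n hn).1) (fun n hn => (htail n hn).2)

/-- Appendix B: the residual L² gain bound ρ_∞: the tail series of residual
gains converges and is bounded by the finite computable expression. -/
theorem stmt_9 (c₁ c₂ : ℝ) (hc₁ : 0 < c₁) (hc₂ : 0 < c₂)
    (hc : c₁ + c₂ ≤ Real.sqrt 2)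
    (ρx γ : ℝ) (hρx : 0 ≤ ρx) (hγ : 0 < γ)
    (xL xR : ℝ) (hxL : 0 < xL) (hLR : xL < xR) (hxR : xR < Real.pi)
    (N : ℕ) (hN : 1 ≤ N)
    (ω ζ b : ℕ → ℝ)
    (hω : ∀ n, ω n = (n : ℝ) ^ 2)
    (hζ : ∀ n, ζ n = (c₁ * (ω n)⁻¹ + c₂ * ω n) / 2)
    (hb : ∀ n, b n = (n : ℝ) * Real.sqrt (2 / Real.pi) *
      (Real.cos (n * xR) - Real.cos (n * xL)))
    (M : ℕ)
    (hM : M = max N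
      (Nat.floor (Real.sqrt ((1 + Real.sqrt (1 - 2 * c₁ * c₂)) / (Real.sqrt 2 * c₂)))))
    (hfeasM : (ω (M + 1)) ^ 4 > (1 + ρx * (ω (M + 1)) ^ 2) * (γ ^ 2)⁻¹)
    (hfeas : ∀ n, N < n → n ≤ M →
      (2 * (ζ n) ^ 2 ≤ 1 →
        4 * (ω n) ^ 4 * (ζ n) ^ 2 * (1 - (ζ n) ^ 2) > (1 + ρx * (ω n) ^ 2) * (γ ^ 2)⁻¹) ∧
      (2 * (ζ n) ^ 2 > 1 → (ω n) ^ 4 > (1 + ρx * (ω n) ^ 2) * (γ ^ 2)⁻¹))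
    (ρ : ℕ → ℝ)
    (hρ : ∀ n, ρ n =
      if 2 * (ζ n) ^ 2 ≤ 1 then
        (b n) ^ 2 * (1 + ρx * (ω n) ^ 2) /
          (4 * (ω n) ^ 4 * (ζ n) ^ 2 * (1 - (ζ n) ^ 2) - (1 + ρx * (ω n) ^ 2) * (γ ^ 2)⁻¹)
      else
        (b n) ^ 2 * (1 + ρx * (ω n) ^ 2) /
          ((ω n) ^ 4 - (1 + ρx * (ω n) ^ 2) * (γ ^ 2)⁻¹))
    (CM : ℝ)
    (hCM : CM = (ω (M + 1)) ^ 2 * (1 + ρx * (ω (M + 1)) ^ 2) /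
      ((ω (M + 1)) ^ 4 - (1 + ρx * (ω (M + 1)) ^ 2) * (γ ^ 2)⁻¹)) :
    Summable (fun k : ℕ => ρ (k + N + 1)) ∧
    (∑' k : ℕ, ρ (k + N + 1)) ≤
      (∑ n ∈ Finset.Ioc N M, ρ n)
        + CM * ((xR - xL) - ∑ n ∈ Finset.Icc 1 M, (b n) ^ 2 / (ω n) ^ 2) :=
  stmt_9_general c₁ c₂ hc₂ ρx γ hρx xL xR hxL hLR hxR N ω ζ b hω hζ hb M hM hfeasM ρ hρ CM hCM
end

section
/- Let c₁ > 0, c₂ > 0 with c₁ + c₂ ≤ √2, and ρₓ ≥ 0. For n ≥ 1 put ωₙ = n² and ζₙ = (c₁ωₙ⁻¹ + c₂ωₙ)/2, and set γ₀ = 2√(1+ρₓ) / ((c₁+c₂)√(4−(c₁+c₂)²)). Then for every integer n ≥ 1: if 2ζₙ² ≤ 1 then (1 + ρₓωₙ²) ≤ γ₀² · 4ωₙ⁴ζₙ²(1−ζₙ²), and if 2ζₙ² > 1 then (1 + ρₓωₙ²) ≤ γ₀² · ωₙ⁴. -/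
/-!
With `a = ζ₁² = ((c₁ + c₂)/2)²` the constant is normalised by `γ₀² · 4a(1 - a) = 1 + ρₓ`.
Since `ωₙ ζₙ = (c₁ + c₂ ωₙ²)/2 ≥ ζ₁`, the quantity `x = ζₙ²` satisfies `a ≤ ωₙ² x`, and as
`t ↦ t(1 - t)` increases on `[0, 1/2]` this gives `a(1 - a) ≤ ωₙ² x (1 - x)` in the underdamped
case. Together with `1 + ρₓ ωₙ² ≤ (1 + ρₓ) ωₙ²` this is the first bound; the second only needs
`1 + ρₓ ≤ γ₀²`, i.e. `4a(1 - a) ≤ 1`.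
-/

open Real

theorem mul_one_sub_le_mul_mul_one_sub {a x k : ℝ} (ha : a ≤ 1 / 2) (hx₀ : 0 ≤ x)
    (hx : x ≤ 1 / 2) (hk : 1 ≤ k) (hax : a ≤ k * x) : a * (1 - a) ≤ k * x * (1 - x) := by
  rcases le_total x a with hxa | hax'
  · nlinarith
  · nlinarith

theorem sq_div_mul_sqrt_mul_four_mul_sq_half {q s : ℝ} (hq : 0 ≤ q) (hs : s ≠ 0)
    (hs4 : s ^ 2 < 4) :
    (2 * √q / (s * √(4 - s ^ 2))) ^ 2 * (4 * (s / 2) ^ 2 * (1 - (s / 2) ^ 2)) = q := by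
  have h4 : 4 - s ^ 2 ≠ 0 := by linarith
  rw [div_pow, mul_pow, mul_pow, sq_sqrt hq, sq_sqrt (by linarith)]
  field_simp
  ring

theorem add_le_mul_inv_add_mul {c₁ c₂ w : ℝ} (hc₂ : 0 ≤ c₂) (hw : 1 ≤ w) :
    c₁ + c₂ ≤ w * (c₁ * w⁻¹ + c₂ * w) := by
  have hw₀ : w ≠ 0 := by positivity
  rw [mul_add, mul_left_comm, mul_inv_cancel₀ hw₀, mul_one]
  nlinarith [mul_nonneg hc₂ (sub_nonneg.2 (one_le_mul_of_one_le_of_one_le hw hw))]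

/-- Key inequality in the proof of Proposition 2: the per-mode squared-gain
lower bounds are dominated by γ₀². -/
theorem stmt_11 (c₁ c₂ : ℝ) (hc₁ : 0 < c₁) (hc₂ : 0 < c₂)
    (hc : c₁ + c₂ ≤ Real.sqrt 2)
    (ρx : ℝ) (hρx : 0 ≤ ρx)
    (ω ζ : ℕ → ℝ)
    (hω : ∀ n, ω n = (n : ℝ) ^ 2)
    (hζ : ∀ n, ζ n = (c₁ * (ω n)⁻¹ + c₂ * ω n) / 2)
    (γ₀ : ℝ)
    (hγ₀ : γ₀ = 2 * Real.sqrt (1 + ρx) /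
      ((c₁ + c₂) * Real.sqrt (4 - (c₁ + c₂) ^ 2))) :
    ∀ n : ℕ, 1 ≤ n →
      (2 * (ζ n) ^ 2 ≤ 1 →
        1 + ρx * (ω n) ^ 2 ≤ γ₀ ^ 2 * (4 * (ω n) ^ 4 * (ζ n) ^ 2 * (1 - (ζ n) ^ 2))) ∧
      (2 * (ζ n) ^ 2 > 1 → 1 + ρx * (ω n) ^ 2 ≤ γ₀ ^ 2 * (ω n) ^ 4) := by
  intro n hn
  have hs : 0 < c₁ + c₂ := add_pos hc₁ hc₂
  have hs2 : (c₁ + c₂) ^ 2 ≤ 2 := by simpa using pow_le_pow_left₀ hs.le hc 2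
  set a := ((c₁ + c₂) / 2) ^ 2 with ha
  have ha_half : a ≤ 1 / 2 := by rw [ha, div_pow]; linarith
  have hγ : γ₀ ^ 2 * (4 * a * (1 - a)) = 1 + ρx := by
    rw [hγ₀]
    exact sq_div_mul_sqrt_mul_four_mul_sq_half (by linarith) hs.ne' (by linarith)
  have hW : 1 ≤ ω n := by
    rw [hω]
    exact one_le_pow₀ (by exact_mod_cast hn)
  have hW2 : 1 ≤ ω n ^ 2 := one_le_pow₀ hW
  have hζ₁ : a ≤ ω n ^ 2 * ζ n ^ 2 := by
    rw [ha, ← mul_pow, hζ, mul_div_assoc']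
    gcongr
    exact add_le_mul_inv_add_mul hc₂.le hW
  have hlow : 1 + ρx * ω n ^ 2 ≤ γ₀ ^ 2 * (4 * a * (1 - a)) * ω n ^ 2 := by
    rw [hγ]; linarith
  constructor
  · intro hund
    calc 1 + ρx * ω n ^ 2 ≤ γ₀ ^ 2 * (4 * a * (1 - a)) * ω n ^ 2 := hlow
      _ ≤ γ₀ ^ 2 * (4 * (ω n ^ 2 * ζ n ^ 2 * (1 - ζ n ^ 2))) * ω n ^ 2 := by
          rw [mul_assoc 4]
          gcongr γ₀ ^ 2 * (4 * ?_) * _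
          exact mul_one_sub_le_mul_mul_one_sub ha_half (sq_nonneg _) (by linarith) hW2 hζ₁
      _ = γ₀ ^ 2 * (4 * ω n ^ 4 * ζ n ^ 2 * (1 - ζ n ^ 2)) := by ring
  · intro _
    calc 1 + ρx * ω n ^ 2 ≤ γ₀ ^ 2 * (4 * a * (1 - a)) * ω n ^ 2 := hlow
      _ ≤ γ₀ ^ 2 * 1 * ω n ^ 2 := by gcongr; nlinarith [sq_nonneg (1 - 2 * a)]
      _ ≤ γ₀ ^ 2 * ω n ^ 4 := by
          rw [mul_one, show ω n ^ 4 = ω n ^ 2 * ω n ^ 2 by ring]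
          gcongr
          exact le_mul_of_one_le_left (by positivity) hW2
end

section
/- Let N ≥ 1 be an integer, c₁ ≥ 0, c₂ ≥ 0, ρₓ ≥ 0, and let ω₁,…,ω_N be distinct positive reals. Define Ω = diag(ω₁,…,ω_N), the 2N×2N matrix A = [[0_N, I_N],[−Ω², −(c₁I_N + c₂Ω²)]], and the (N+1)×2N matrix C = [[√(I_N + ρₓΩ²), 0_N],[0_{1×N}, 0_{1×N}]] (square root taken entrywise on the diagonal). Then the pair (A, C) is observable: the only vector x ∈ ℝ^{2N} with C Aᵏ x = 0 for all k = 0, 1, …, 2N−1 is x = 0. -/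
open Matrix

/-- Remark 3: the pair (A, C) of the truncated modal Euler–Bernoulli dynamics
with position outputs weighted by √(1+ρₓωᵢ²) is observable. -/
theorem stmt_14 (N : ℕ) (hN : 0 < N)
    (c₁ c₂ ρx : ℝ) (hc₁ : 0 ≤ c₁) (hc₂ : 0 ≤ c₂) (hρx : 0 ≤ ρx)
    (ω : Fin N → ℝ) (hωpos : ∀ i, 0 < ω i) (hωinj : Function.Injective ω)
    (A : Matrix (Fin N ⊕ Fin N) (Fin N ⊕ Fin N) ℝ)
    (hA : A = Matrix.fromBlocks 0 1
      (-(Matrix.diagonal fun i => (ω i) ^ 2))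
      (-(c₁ • (1 : Matrix (Fin N) (Fin N) ℝ)
         + c₂ • Matrix.diagonal fun i => (ω i) ^ 2)))
    (C : Matrix (Fin N ⊕ Fin 1) (Fin N ⊕ Fin N) ℝ)
    (hC : C = Matrix.fromBlocks
      (Matrix.diagonal fun i => Real.sqrt (1 + ρx * (ω i) ^ 2)) 0 0 0) :
    ∀ x : (Fin N ⊕ Fin N) → ℝ,
      (∀ k < 2 * N, C.mulVec ((A ^ k).mulVec x) = 0) → x = 0 := by
  intro x hx
  have h0 := hx 0 (by omega)
  have h1 := hx 1 (by omega)
  subst hA hC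
  have hpos : ∀ i, Real.sqrt (1 + ρx * (ω i) ^ 2) ≠ 0 := by
    intro i
    have h : 0 < 1 + ρx * (ω i) ^ 2 := by positivity
    exact ne_of_gt (Real.sqrt_pos.mpr h)
  rw [pow_zero, Matrix.one_mulVec] at h0
  rw [pow_one] at h1
  funext j
  cases j with
  | inl i =>
    have h := congrFun h0 (Sum.inl i)
    simp [Matrix.mulVec, dotProduct, Fintype.sum_sum_type,
      Matrix.fromBlocks, Matrix.diagonal] at h
    rcases h with h | h
    · exact absurd h (hpos i)
    · simpa using h
  | inr i =>
    have h := congrFun h1 (Sum.inl i)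
    simp [Matrix.mulVec, dotProduct, Fintype.sum_sum_type,
      Matrix.fromBlocks, Matrix.diagonal, Matrix.one_apply] at h
    rcases h with h | h
    · exact absurd h (hpos i)
    · simpa using h
end

section
/- Let c₁ > 0, c₂ > 0 with c₁ + c₂ ≤ √2, let ρₓ ≥ 0, 0 < x_L < x_R < π, and let γ > γ₀ := 2√(1+ρₓ)/((c₁+c₂)√(4−(c₁+c₂)²)). For n ≥ 1 put ωₙ = n², ζₙ = (c₁ωₙ⁻¹ + c₂ωₙ)/2, bₙ = n√(2/π)(cos(n x_R) − cos(n x_L)), and define ρₙ = bₙ²(1+ρₓωₙ²)/(4ωₙ⁴ζₙ²(1−ζₙ²) − (1+ρₓωₙ²)γ⁻²) if 2ζₙ² ≤ 1 and ρₙ = bₙ²(1+ρₓωₙ²)/(ωₙ⁴ − (1+ρₓωₙ²)γ⁻²) if 2ζₙ² > 1. Then every ρₙ is well defined and nonnegative (all denominators are positive), the series Σ_{n=1}^∞ ρₙ converges, and the tail sums Σ_{n=N+1}^∞ ρₙ decrease monotonically to 0 as N → ∞. -/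
open Filter

set_option maxHeartbeats 1000000

private lemma aux_under (c₁ c₂ ρx w z P : ℝ) (hc₁ : 0 < c₁) (hc₂ : 0 < c₂)
    (hs2 : (c₁ + c₂) ^ 2 ≤ 2) (hρx : 0 ≤ ρx) (hP : 0 < P)
    (hinv : 4 * (1 + ρx) * P < (c₁ + c₂) ^ 2 * (4 - (c₁ + c₂) ^ 2))
    (hω1 : 1 ≤ w) (hz : z = (c₁ * w⁻¹ + c₂ * w) / 2) (h : 2 * z ^ 2 ≤ 1) :
    0 < 4 * w ^ 4 * z ^ 2 * (1 - z ^ 2) - (1 + ρx * w ^ 2) * P := by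
  have hw0 : 0 < w := lt_of_lt_of_le one_pos hω1
  have hw2 : (1:ℝ) ≤ w ^ 2 := by nlinarith
  have hzpos : 0 < z := by rw [hz]; positivity
  have hwz : 2 * (w * z) = c₁ + c₂ * w ^ 2 := by rw [hz]; field_simp
  have hκ : c₁ + c₂ ≤ 2 * (w * z) := by
    nlinarith [mul_nonneg hc₂.le (by linarith : (0:ℝ) ≤ w ^ 2 - 1)]
  have h2t : 2 * (w * z) ^ 2 ≤ w ^ 2 := by nlinarith
  have h4t : (c₁ + c₂) ^ 2 ≤ 4 * (w * z) ^ 2 := by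
    nlinarith [mul_pos hw0 hzpos]
  have hA2 : 0 ≤ (w * z) ^ 2 - (c₁ + c₂) ^ 2 / 4 := by linarith
  have hB2 : 0 ≤ w ^ 2 - (w * z) ^ 2 - (c₁ + c₂) ^ 2 / 4 := by nlinarith
  have hStepB : (c₁ + c₂) ^ 2 * (4 - (c₁ + c₂) ^ 2) * w ^ 2 / 4
      ≤ 4 * w ^ 4 * z ^ 2 * (1 - z ^ 2) := by
    nlinarith [mul_nonneg hA2 hB2,
      mul_nonneg (mul_nonneg (sq_nonneg (c₁ + c₂)) (sq_nonneg (c₁ + c₂)))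
        (by linarith : (0:ℝ) ≤ w ^ 2 - 1)]
  have hStepA : (1 + ρx * w ^ 2) * P
      < (c₁ + c₂) ^ 2 * (4 - (c₁ + c₂) ^ 2) * w ^ 2 / 4 := by
    have h1 := mul_lt_mul_of_pos_right hinv (show (0:ℝ) < w ^ 2 / 4 by positivity)
    have h2 : 0 ≤ P * (w ^ 2 - 1) := mul_nonneg hP.le (by linarith)
    nlinarith
  linarith

private lemma aux_over (ρx w P : ℝ) (hρx : 0 ≤ ρx) (hP : 0 < P)
    (hγ1 : (1 + ρx) * P < 1) (hω1 : 1 ≤ w) :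
    (1 - (1 + ρx) * P) * w ^ 4 ≤ w ^ 4 - (1 + ρx * w ^ 2) * P := by
  have hw2 : (1:ℝ) ≤ w ^ 2 := by nlinarith
  have hw4 : w ^ 2 ≤ w ^ 4 := by nlinarith
  have h2 : 0 ≤ P * (w ^ 4 + ρx * w ^ 4 - 1 - ρx * w ^ 2) :=
    mul_nonneg hP.le (by nlinarith [mul_nonneg hρx (by linarith : (0:ℝ) ≤ w ^ 4 - w ^ 2)])
  nlinarith

private lemma aux_over_pos (ρx w P : ℝ) (hρx : 0 ≤ ρx) (hP : 0 < P)
    (hγ1 : (1 + ρx) * P < 1) (hω1 : 1 ≤ w) :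
    0 < w ^ 4 - (1 + ρx * w ^ 2) * P := by
  have h1 := aux_over ρx w P hρx hP hγ1 hω1
  have hw4 : (0:ℝ) < w ^ 4 := by positivity
  nlinarith

private lemma aux_b (m q d : ℝ) (hq0 : 0 ≤ q) (hq : q ^ 2 ≤ 1) (hd : d ^ 2 ≤ 4) :
    (m * q * d) ^ 2 ≤ 4 * m ^ 2 := by
  nlinarith [sq_nonneg m, sq_nonneg d, sq_nonneg (m * d), sq_nonneg (m * q * d),
    mul_nonneg (sq_nonneg m) (sq_nonneg d)]

private lemma aux_regime (c₁ c₂ m z : ℝ) (hc₁ : 0 < c₁) (hc₂ : 0 < c₂)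
    (hm : 1 ≤ m) (hc2n : 2 < c₂ ^ 2 * m)
    (hz : z = (c₁ * (m ^ 2)⁻¹ + c₂ * m ^ 2) / 2) : 1 < 2 * z ^ 2 := by
  have hm0 : (0:ℝ) < m := lt_of_lt_of_le one_pos hm
  have hm2 : (0:ℝ) < m ^ 2 := by positivity
  have hm4 : m ≤ m ^ 4 := by
    nlinarith [mul_nonneg (mul_nonneg hm0.le (by linarith : (0:ℝ) ≤ m - 1))
      (by positivity : (0:ℝ) ≤ m ^ 2 + m + 1)]
  have hzlb : c₂ * m ^ 2 / 2 ≤ z := by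
    rw [hz]
    have h1 : 0 < c₁ * (m ^ 2)⁻¹ := by positivity
    linarith
  have hzlb0 : (0:ℝ) ≤ c₂ * m ^ 2 / 2 := by positivity
  have hsq := pow_le_pow_left₀ hzlb0 hzlb 2
  nlinarith

/-- For γ > γ₀ all residual-mode gains ρₙ are well defined and nonnegative,
their series converges, and the tail sums decrease monotonically to 0. -/
theorem stmt_17 (c₁ c₂ : ℝ) (hc₁ : 0 < c₁) (hc₂ : 0 < c₂)
    (hc : c₁ + c₂ ≤ Real.sqrt 2)
    (ρx : ℝ) (hρx : 0 ≤ ρx)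
    (xL xR : ℝ) (hxL : 0 < xL) (hLR : xL < xR) (hxR : xR < Real.pi)
    (γ : ℝ)
    (hγ : γ > 2 * Real.sqrt (1 + ρx) /
      ((c₁ + c₂) * Real.sqrt (4 - (c₁ + c₂) ^ 2)))
    (ω ζ b ρ : ℕ → ℝ)
    (hω : ∀ n, ω n = (n : ℝ) ^ 2)
    (hζ : ∀ n, ζ n = (c₁ * (ω n)⁻¹ + c₂ * ω n) / 2)
    (hb : ∀ n, b n = (n : ℝ) * Real.sqrt (2 / Real.pi) *
      (Real.cos (n * xR) - Real.cos (n * xL)))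
    (hρ : ∀ n, ρ n =
      if 2 * (ζ n) ^ 2 ≤ 1 then
        (b n) ^ 2 * (1 + ρx * (ω n) ^ 2) /
          (4 * (ω n) ^ 4 * (ζ n) ^ 2 * (1 - (ζ n) ^ 2)
            - (1 + ρx * (ω n) ^ 2) * (γ ^ 2)⁻¹)
      else
        (b n) ^ 2 * (1 + ρx * (ω n) ^ 2) /
          ((ω n) ^ 4 - (1 + ρx * (ω n) ^ 2) * (γ ^ 2)⁻¹)) :
    (∀ n : ℕ, 1 ≤ n →
      (0 < if 2 * (ζ n) ^ 2 ≤ 1 then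
          4 * (ω n) ^ 4 * (ζ n) ^ 2 * (1 - (ζ n) ^ 2)
            - (1 + ρx * (ω n) ^ 2) * (γ ^ 2)⁻¹
        else (ω n) ^ 4 - (1 + ρx * (ω n) ^ 2) * (γ ^ 2)⁻¹) ∧
      0 ≤ ρ n) ∧
    Summable (fun n : ℕ => ρ (n + 1)) ∧
    Antitone (fun N : ℕ => ∑' k : ℕ, ρ (k + N + 1)) ∧
    Tendsto (fun N : ℕ => ∑' k : ℕ, ρ (k + N + 1)) atTop (nhds 0) := by
  have hs : 0 < c₁ + c₂ := by linarith
  have hs2 : (c₁ + c₂) ^ 2 ≤ 2 := by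
    nlinarith [Real.sq_sqrt (by norm_num : (0:ℝ) ≤ 2), Real.sqrt_nonneg 2]
  have h4 : 0 < 4 - (c₁ + c₂) ^ 2 := by linarith
  have h1ρ : (0:ℝ) < 1 + ρx := by linarith
  have hγ0pos : 0 < 2 * Real.sqrt (1 + ρx) /
      ((c₁ + c₂) * Real.sqrt (4 - (c₁ + c₂) ^ 2)) := by
    apply div_pos (by positivity)
    exact mul_pos hs (Real.sqrt_pos.mpr h4)
  have hγpos : 0 < γ := lt_trans hγ0pos hγ
  have hγ2 : 0 < γ ^ 2 := by positivity
  have hP : 0 < (γ ^ 2)⁻¹ := inv_pos.mpr hγ2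
  have hγsq : 4 * (1 + ρx) / ((c₁ + c₂) ^ 2 * (4 - (c₁ + c₂) ^ 2)) < γ ^ 2 := by
    have h1 : (2 * Real.sqrt (1 + ρx) /
        ((c₁ + c₂) * Real.sqrt (4 - (c₁ + c₂) ^ 2))) ^ 2 < γ ^ 2 :=
      pow_lt_pow_left₀ hγ hγ0pos.le (by norm_num)
    calc 4 * (1 + ρx) / ((c₁ + c₂) ^ 2 * (4 - (c₁ + c₂) ^ 2))
        = (2 * Real.sqrt (1 + ρx) /
            ((c₁ + c₂) * Real.sqrt (4 - (c₁ + c₂) ^ 2))) ^ 2 := by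
          rw [div_pow, mul_pow, mul_pow, Real.sq_sqrt h1ρ.le, Real.sq_sqrt h4.le]
          ring
      _ < γ ^ 2 := h1
  have hinv : 4 * (1 + ρx) * (γ ^ 2)⁻¹ < (c₁ + c₂) ^ 2 * (4 - (c₁ + c₂) ^ 2) := by
    have h' : 4 * (1 + ρx) < (c₁ + c₂) ^ 2 * (4 - (c₁ + c₂) ^ 2) * γ ^ 2 := by
      rw [div_lt_iff₀ (by positivity)] at hγsq; linarith
    rw [← div_eq_mul_inv, div_lt_iff₀ hγ2]; exact h'
  have hγ1 : (1 + ρx) * (γ ^ 2)⁻¹ < 1 := by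
    nlinarith [sq_nonneg ((c₁ + c₂) ^ 2 - 2)]
  -- per-mode positivity of the denominators
  have hden : ∀ n : ℕ, 1 ≤ n →
      (0 < if 2 * (ζ n) ^ 2 ≤ 1 then
          4 * (ω n) ^ 4 * (ζ n) ^ 2 * (1 - (ζ n) ^ 2)
            - (1 + ρx * (ω n) ^ 2) * (γ ^ 2)⁻¹
        else (ω n) ^ 4 - (1 + ρx * (ω n) ^ 2) * (γ ^ 2)⁻¹) := by
    intro n hn
    have hn1 : (1:ℝ) ≤ (n : ℝ) := by exact_mod_cast hn
    have hω1 : (1:ℝ) ≤ ω n := by rw [hω]; nlinarith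
    have hzz : ζ n = (c₁ * (ω n)⁻¹ + c₂ * ω n) / 2 := hζ n
    split_ifs with h
    · exact aux_under c₁ c₂ ρx (ω n) (ζ n) (γ ^ 2)⁻¹
        hc₁ hc₂ hs2 hρx hP hinv hω1 hzz h
    · exact aux_over_pos ρx (ω n) (γ ^ 2)⁻¹ hρx hP hγ1 hω1
  -- nonnegativity of ρ
  have hρnn : ∀ n : ℕ, 1 ≤ n → 0 ≤ ρ n := by
    intro n hn
    have h0 := hden n hn
    have hnum : 0 ≤ (b n) ^ 2 * (1 + ρx * (ω n) ^ 2) :=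
      mul_nonneg (sq_nonneg _) (by nlinarith [sq_nonneg (ω n)])
    rw [hρ n]
    split_ifs at h0 ⊢ with h
    · exact div_nonneg hnum h0.le
    · exact div_nonneg hnum h0.le
  -- the quantitative bound in the overdamped regime
  set C : ℝ := 4 * (1 + ρx) / (1 - (1 + ρx) * (γ ^ 2)⁻¹) with hCdef
  have hCpos : 0 < C := div_pos (by linarith) (by linarith)
  have hbnd : ∀ n : ℕ, 1 ≤ n → ¬(2 * (ζ n) ^ 2 ≤ 1) →
      ρ n ≤ C * (((n : ℝ)) ^ 2)⁻¹ := by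
    intro n hn h
    have hn1 : (1:ℝ) ≤ (n : ℝ) := by exact_mod_cast hn
    have hn2 : (0:ℝ) < (n : ℝ) ^ 2 := by positivity
    have hω1 : (1:ℝ) ≤ ω n := by rw [hω]; nlinarith
    have hwn : ω n = (n : ℝ) ^ 2 := hω n
    have h0 := hden n hn
    rw [if_neg h] at h0
    have hDlb : (1 - (1 + ρx) * (γ ^ 2)⁻¹) * (ω n) ^ 4
        ≤ (ω n) ^ 4 - (1 + ρx * (ω n) ^ 2) * (γ ^ 2)⁻¹ :=
      aux_over ρx (ω n) (γ ^ 2)⁻¹ hρx hP hγ1 hω1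
    -- upper bound on b n ^ 2
    have hb2 : (b n) ^ 2 ≤ 4 * (n : ℝ) ^ 2 := by
      rw [hb]
      apply aux_b
      · exact Real.sqrt_nonneg _
      · rw [Real.sq_sqrt (by positivity : (0:ℝ) ≤ 2 / Real.pi)]
        rw [div_le_one Real.pi_pos]
        linarith [Real.pi_gt_three]
      · nlinarith [Real.neg_one_le_cos ((n:ℝ) * xR), Real.cos_le_one ((n:ℝ) * xR),
          Real.neg_one_le_cos ((n:ℝ) * xL), Real.cos_le_one ((n:ℝ) * xL)]
    -- numerator bound
    have hnum : (b n) ^ 2 * (1 + ρx * (ω n) ^ 2) ≤ 4 * (1 + ρx) * (n : ℝ) ^ 6 := by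
      have hnum1 : 1 + ρx * (ω n) ^ 2 ≤ (1 + ρx) * (n : ℝ) ^ 4 := by
        rw [hwn]; nlinarith [mul_nonneg hρx (by nlinarith : (0:ℝ) ≤ ((n:ℝ)^2)^2 - 1)]
      have hb0 : 0 ≤ (b n) ^ 2 := sq_nonneg _
      calc (b n) ^ 2 * (1 + ρx * (ω n) ^ 2)
          ≤ (4 * (n : ℝ) ^ 2) * ((1 + ρx) * (n : ℝ) ^ 4) :=
            mul_le_mul hb2 hnum1 (by positivity) (by positivity)
        _ = 4 * (1 + ρx) * (n : ℝ) ^ 6 := by ring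
    rw [hρ n, if_neg h, ← div_eq_mul_inv C ((n:ℝ) ^ 2), div_le_div_iff₀ h0 hn2]
    have e1 : (b n) ^ 2 * (1 + ρx * (ω n) ^ 2) * (n : ℝ) ^ 2
        ≤ 4 * (1 + ρx) * (n : ℝ) ^ 6 * (n : ℝ) ^ 2 :=
      mul_le_mul_of_nonneg_right hnum hn2.le
    have hC1 : C * (1 - (1 + ρx) * (γ ^ 2)⁻¹) = 4 * (1 + ρx) := by
      rw [hCdef]; exact div_mul_cancel₀ _ (ne_of_gt (by linarith))
    have e2 : 4 * (1 + ρx) * (n : ℝ) ^ 6 * (n : ℝ) ^ 2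
        = C * ((1 - (1 + ρx) * (γ ^ 2)⁻¹) * (ω n) ^ 4) := by
      rw [hwn, ← mul_assoc, hC1]; ring
    have e3 : C * ((1 - (1 + ρx) * (γ ^ 2)⁻¹) * (ω n) ^ 4)
        ≤ C * ((ω n) ^ 4 - (1 + ρx * (ω n) ^ 2) * (γ ^ 2)⁻¹) :=
      mul_le_mul_of_nonneg_left hDlb hCpos.le
    linarith
  -- the cutoff beyond which we are in the overdamped regime
  set N₀ : ℕ := ⌈2 / c₂ ^ 2⌉₊ + 1 with hN₀def
  have hover : ∀ n : ℕ, N₀ ≤ n → ¬(2 * (ζ n) ^ 2 ≤ 1) := by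
    intro n hn
    have hn1 : 1 ≤ n := le_trans (by omega) hn
    have hn1' : (1:ℝ) ≤ (n : ℝ) := by exact_mod_cast hn1
    have hcn : 2 / c₂ ^ 2 < (n : ℝ) := by
      have h1 : (2 / c₂ ^ 2 : ℝ) ≤ (⌈2 / c₂ ^ 2⌉₊ : ℝ) := Nat.le_ceil _
      have h2 : ((⌈2 / c₂ ^ 2⌉₊ : ℕ) : ℝ) + 1 ≤ (n : ℝ) := by
        exact_mod_cast hn
      linarith
    have hc2n : 2 < c₂ ^ 2 * (n : ℝ) := by
      rw [div_lt_iff₀ (by positivity)] at hcn; linarith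
    have hzz : ζ n = (c₁ * (((n:ℝ)) ^ 2)⁻¹ + c₂ * ((n:ℝ)) ^ 2) / 2 := by
      rw [hζ n, hω n]
    push_neg
    exact aux_regime c₁ c₂ (n : ℝ) (ζ n) hc₁ hc₂ hn1' hc2n hzz
  -- summability
  have hsum : Summable (fun n : ℕ => ρ (n + 1)) := by
    rw [← summable_nat_add_iff N₀]
    have hsum2 : Summable (fun n : ℕ => ((n : ℝ) ^ 2)⁻¹) :=
      Real.summable_nat_pow_inv.mpr (by norm_num)
    have hsum3 : Summable (fun n : ℕ => C * (((n + (N₀ + 1) : ℕ) : ℝ) ^ 2)⁻¹) :=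
      ((summable_nat_add_iff (N₀ + 1)).mpr hsum2).mul_left C
    exact Summable.of_nonneg_of_le
      (fun n => hρnn (n + N₀ + 1) (by omega))
      (fun n => hbnd (n + N₀ + 1) (by omega) (hover (n + N₀ + 1) (by omega)))
      hsum3
  refine ⟨fun n hn => ⟨hden n hn, hρnn n hn⟩, hsum, ?_, ?_⟩
  · -- antitone
    apply antitone_nat_of_succ_le
    intro N
    have hsN : Summable (fun k : ℕ => ρ (k + N + 1)) :=
      (summable_nat_add_iff N).mpr hsum
    have hT : (∑' k : ℕ, ρ (k + N + 1))
        = ρ (N + 1) + ∑' k : ℕ, ρ (k + (N + 1) + 1) := by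
      rw [Summable.tsum_eq_zero_add hsN]
      congr 1
      · congr 1; omega
      · exact tsum_congr fun k => by congr 1; omega
    have hnn := hρnn (N + 1) (by omega)
    simp only [hT]
    linarith
  · -- tendsto
    exact tendsto_sum_nat_add (fun n : ℕ => ρ (n + 1))
end

section
/- Under the hypotheses of the truncated Theorem 1 setup — positive integers N < M′; c₁, c₂ > 0; ρₓ, ρᵤ ≥ 0; γ > 0; 0 < x_L < x_R < π; ωₙ = n², ζₙ = (c₁ωₙ⁻¹+c₂ωₙ)/2, bₙ = n√(2/π)(cos(n x_R) − cos(n x_L)); Ω = diag(ω₁,…,ω_N); A = [[0_N,I_N],[−Ω²,−(c₁I_N+c₂Ω²)]]; B = (0,…,0,b₁,…,b_N)ᵀ; E = [0_N; I_N]; Q = diag(1+ρₓω₁²,…,1+ρₓω_N²,0,…,0); ρ_∞ > 0 and symmetric positive definite P satisfying PA + AᵀP − P(BR⁻¹Bᵀ − γ⁻²EEᵀ)P + Q = 0 with R = ρᵤ + ρ_∞; for N < n ≤ M′, ρₙ > 0 with Σ_{n=N+1}^{M′} ρₙ ≤ ρ_∞ and symmetric positive definite Pₙ satisfying PₙAₙ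 + AₙᵀPₙ + γ⁻²Pₙ[[0,0],[0,1+γ²bₙ²/ρₙ]]Pₙ + [[1+ρₓωₙ²,0],[0,0]] = 0 with Aₙ = [[0,1],[−ωₙ²,−2ζₙωₙ]] — suppose z₁,…,z_{M′} : [0,∞) → ℝ are twice continuously differentiable, satisfy z̈ₙ + 2ζₙωₙżₙ + ωₙ²zₙ = bₙu with u(t) = −R⁻¹BᵀP z^N(t), z^N = (z₁,…,z_N,ż₁,…,ż_N)ᵀ, and arbitrary initial conditions (no disturbance, wₙ ≡ 0). Then the function V(t) = z^N(t)ᵀ P z^N(t) + Σ_{n=N+1}^{M′} z̄ₙ(t)ᵀ Pₙ z̄ₙ(t), where z̄ₙ = (zₙ, żₙ)ᵀ, is non-increasing on [0,∞). -/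
/-!
Along `ẋ = A x + u B` with `P` symmetric, `d/dt (xᵀ P x) = xᵀ (P A + Aᵀ P) x + 2 u Bᵀ P x`, and a
Riccati equation `P A + Aᵀ P + P S P + Q = 0` with `Q ⪰ 0` and `S ⪰ k B Bᵀ` bounds this by
`-k (Bᵀ P x)² + 2 u Bᵀ P x`. For the controlled block (`k = -R⁻¹`, `u = -R⁻¹ Bᵀ P x`) this equals
`-R u²`; for each residual mode the bounded-real equation gives `k = 1/ρₙ`, and completing the
square bounds the derivative by `ρₙ u²`. Hence `V̇ ≤ (∑ ρₙ - R) u² ≤ -ρᵤ u² ≤ 0`.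
-/

open Matrix Set

namespace Matrix

variable {n m : Type*} [Fintype n]

theorem IsSymm.dotProduct_mulVec_comm {α : Type*} [CommSemiring α] {P : Matrix n n α}
    (hP : P.IsSymm) (v w : n → α) : v ⬝ᵥ P *ᵥ w = w ⬝ᵥ P *ᵥ v := by
  rw [dotProduct_mulVec, ← hP.eq, vecMul_transpose, dotProduct_comm, hP.eq]

theorem IsSymm.lyapunov_deriv_eq {α : Type*} [CommRing α] {P : Matrix n n α}
    (hP : P.IsSymm) (A : Matrix n n α) (B x : n → α) (u : α) :
    (A *ᵥ x + u • B) ⬝ᵥ P *ᵥ x + x ⬝ᵥ P *ᵥ (A *ᵥ x + u • B)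
      = x ⬝ᵥ (P * A + Aᵀ * P) *ᵥ x + 2 * u * (B ⬝ᵥ P *ᵥ x) := by
  have hAP : (A *ᵥ x) ⬝ᵥ P *ᵥ x = x ⬝ᵥ (Aᵀ * P) *ᵥ x := by
    rw [← mulVec_mulVec, dotProduct_mulVec x, vecMul_transpose]
  rw [add_dotProduct, hAP, mulVec_add, dotProduct_add, mulVec_smul, dotProduct_smul,
    smul_dotProduct, hP.dotProduct_mulVec_comm x B, add_mulVec, dotProduct_add, mulVec_mulVec,
    smul_eq_mul]
  ring

theorem IsSymm.dotProduct_mulVec_of_riccati {α : Type*} [CommRing α] {P A S Q : Matrix n n α}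
    (hP : P.IsSymm) (h : P * A + Aᵀ * P + P * S * P + Q = 0) (x : n → α) :
    x ⬝ᵥ (P * A + Aᵀ * P) *ᵥ x = -((P *ᵥ x) ⬝ᵥ S *ᵥ (P *ᵥ x)) - x ⬝ᵥ Q *ᵥ x := by
  have hPA : P * A + Aᵀ * P = -(P * S * P) - Q := by
    rw [← sub_eq_zero, ← h]; abel
  rw [hPA, sub_mulVec, neg_mulVec, dotProduct_sub, dotProduct_neg, ← mulVec_mulVec,
    ← mulVec_mulVec, hP.dotProduct_mulVec_comm, dotProduct_comm]

theorem dotProduct_vecMulVec_self_mulVec {α : Type*} [CommSemiring α] (B y : n → α) :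
    y ⬝ᵥ vecMulVec B B *ᵥ y = (B ⬝ᵥ y) ^ 2 := by
  rw [vecMulVec_mulVec, op_smul_eq_smul, dotProduct_smul, smul_eq_mul, dotProduct_comm, sq]

theorem IsSymm.lyapunov_deriv_le_of_riccati {P A S Q : Matrix n n ℝ} (hP : P.IsSymm)
    (hQ : Q.PosSemidef) (hRic : P * A + Aᵀ * P + P * S * P + Q = 0) {B : n → ℝ} {k : ℝ}
    (hS : (S - k • vecMulVec B B).PosSemidef) (x : n → ℝ) (u : ℝ) :
    (A *ᵥ x + u • B) ⬝ᵥ P *ᵥ x + x ⬝ᵥ P *ᵥ (A *ᵥ x + u • B)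
      ≤ -(k * (B ⬝ᵥ P *ᵥ x) ^ 2) + 2 * u * (B ⬝ᵥ P *ᵥ x) := by
  have hSk := hS.dotProduct_mulVec_nonneg (P *ᵥ x)
  have hQx := hQ.dotProduct_mulVec_nonneg x
  rw [star_trivial, sub_mulVec, dotProduct_sub, smul_mulVec, dotProduct_smul,
    dotProduct_vecMulVec_self_mulVec, smul_eq_mul] at hSk
  rw [star_trivial] at hQx
  rw [hP.lyapunov_deriv_eq, hP.dotProduct_mulVec_of_riccati hRic]
  linarith

theorem IsSymm.closedLoop_lyapunov_deriv_le [Fintype m] {P A Q : Matrix n n ℝ}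
    {E : Matrix n m ℝ} {B : n → ℝ} {R c : ℝ} (hP : P.IsSymm) (hQ : Q.PosSemidef) (hc : 0 ≤ c)
    (hARE : P * A + Aᵀ * P - P * (R⁻¹ • vecMulVec B B - c • (E * Eᵀ)) * P + Q = 0)
    (x : n → ℝ) {u : ℝ} (hu : u = -(R⁻¹ * (B ⬝ᵥ P *ᵥ x))) :
    (A *ᵥ x + u • B) ⬝ᵥ P *ᵥ x + x ⬝ᵥ P *ᵥ (A *ᵥ x + u • B) ≤ -(R * u ^ 2) := by
  have hRic : P * A + Aᵀ * P + P * -(R⁻¹ • vecMulVec B B - c • (E * Eᵀ)) * P + Q = 0 := by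
    rwa [mul_neg, neg_mul, ← sub_eq_add_neg]
  have hS : (-(R⁻¹ • vecMulVec B B - c • (E * Eᵀ)) - (-R⁻¹) • vecMulVec B B).PosSemidef := by
    rw [neg_smul, neg_sub, sub_neg_eq_add, sub_add_cancel, ← conjTranspose_eq_transpose_of_trivial]
    exact (posSemidef_self_mul_conjTranspose E).smul hc
  refine (hP.lyapunov_deriv_le_of_riccati hQ hRic hS x u).trans_eq ?_
  subst hu
  rcases eq_or_ne R 0 with hR | hR
  · simp [hR]
  · field_simp
    ring

theorem IsSymm.lyapunov_deriv_le_of_boundedReal {P A : Matrix (Fin 2) (Fin 2) ℝ} (hP : P.IsSymm)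
    {b ρ γ q : ℝ} (hρ : 0 < ρ) (hγ : γ ≠ 0) (hq : 0 ≤ q)
    (hBRL : P * A + Aᵀ * P + (γ ^ 2)⁻¹ • (P * !![0, 0; 0, 1 + γ ^ 2 * b ^ 2 / ρ] * P)
      + !![q, 0; 0, 0] = 0)
    (x : Fin 2 → ℝ) (u : ℝ) :
    (A *ᵥ x + u • ![0, b]) ⬝ᵥ P *ᵥ x + x ⬝ᵥ P *ᵥ (A *ᵥ x + u • ![0, b]) ≤ ρ * u ^ 2 := by
  have hRic : P * A + Aᵀ * P + P * ((γ ^ 2)⁻¹ • !![0, 0; 0, 1 + γ ^ 2 * b ^ 2 / ρ]) * P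
      + !![q, 0; 0, 0] = 0 := by
    rwa [Matrix.mul_smul, Matrix.smul_mul]
  have hQ : (!![q, 0; 0, 0] : Matrix (Fin 2) (Fin 2) ℝ).PosSemidef := by
    convert PosSemidef.diagonal (d := ![q, 0]) fun i => by fin_cases i <;> simp [hq]
    ext i j; fin_cases i <;> fin_cases j <;> simp
  have hS : ((γ ^ 2)⁻¹ • !![0, 0; 0, 1 + γ ^ 2 * b ^ 2 / ρ]
      - ρ⁻¹ • vecMulVec ![0, b] ![0, b]).PosSemidef := by
    convert PosSemidef.diagonal (d := ![0, (γ ^ 2)⁻¹]) fun i => by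
      fin_cases i <;> simp [sq_nonneg]
    ext i j; fin_cases i <;> fin_cases j <;> simp
    field_simp
    ring
  refine (hP.lyapunov_deriv_le_of_riccati hQ hRic hS x u).trans ?_
  set s := ![0, b] ⬝ᵥ P *ᵥ x
  have hsq : ρ * u ^ 2 - (-(ρ⁻¹ * s ^ 2) + 2 * u * s) = (ρ * u - s) ^ 2 / ρ := by
    field_simp
    ring
  have := div_nonneg (sq_nonneg (ρ * u - s)) hρ.le
  linarith

theorem PosSemidef.fromBlocks_diagonal_zero {ι κ : Type*} [Fintype ι] [Fintype κ]
    [DecidableEq ι] [DecidableEq κ] {d : ι → ℝ} (hd : 0 ≤ d) :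
    (fromBlocks (diagonal d) 0 0 (0 : Matrix κ κ ℝ)).PosSemidef := by
  rw [← diagonal_zero, fromBlocks_diagonal]
  exact PosSemidef.diagonal fun i => by rcases i with i | i; exacts [hd i, le_rfl]

end Matrix

theorem hasDerivWithinAt_dotProduct_mulVec {n : Type*} [Fintype n] (M : Matrix n n ℝ)
    {x : ℝ → n → ℝ} {x' : n → ℝ} {s : Set ℝ} {t : ℝ} (hx : HasDerivWithinAt x x' s t) :
    HasDerivWithinAt (fun τ => x τ ⬝ᵥ M *ᵥ x τ) (x' ⬝ᵥ M *ᵥ x t + x t ⬝ᵥ M *ᵥ x') s t := by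
  have hMx : HasDerivWithinAt (fun τ => M *ᵥ x τ) (M *ᵥ x') s t :=
    (LinearMap.toContinuousLinearMap M.mulVecLin).hasFDerivAt.comp_hasDerivWithinAt t hx
  simpa only [dotProduct, Finset.sum_add_distrib] using HasDerivWithinAt.fun_sum (u := Finset.univ)
    fun i _ => (hasDerivWithinAt_pi.1 hx i).fun_mul (hasDerivWithinAt_pi.1 hMx i)

theorem hasDerivWithinAt_sumElim_modal {ι : Type*} [Fintype ι] [DecidableEq ι]
    {c₁ c₂ U : ℝ} {w β : ι → ℝ} {x v a : ι → ℝ → ℝ} {s : Set ℝ} {t : ℝ}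
    (hx : ∀ i, HasDerivWithinAt (x i) (v i t) s t) (hv : ∀ i, HasDerivWithinAt (v i) (a i t) s t)
    (hode : ∀ i, a i t + (c₁ + c₂ * w i) * v i t + w i * x i t = β i * U) :
    HasDerivWithinAt (fun τ => Sum.elim (fun i => x i τ) (fun i => v i τ))
      (fromBlocks 0 1 (-diagonal w) (-(c₁ • (1 : Matrix ι ι ℝ) + c₂ • diagonal w))
        *ᵥ Sum.elim (fun i => x i t) (fun i => v i t) + U • Sum.elim (fun _ => 0) β) s t := by
  refine hasDerivWithinAt_pi.2 ?_
  rintro (i | i)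
  · simpa [fromBlocks_mulVec] using hx i
  · refine (hv i).congr_deriv ?_
    simp [fromBlocks_mulVec, neg_mulVec, add_mulVec, smul_mulVec, mulVec_diagonal]
    linear_combination hode i

theorem hasDerivWithinAt_vecTwo_companion {x v a : ℝ → ℝ} {k d β U : ℝ} {s : Set ℝ} {t : ℝ}
    (hx : HasDerivWithinAt x (v t) s t) (hv : HasDerivWithinAt v (a t) s t)
    (hode : a t + d * v t + k * x t = β * U) :
    HasDerivWithinAt (fun τ => ![x τ, v τ])
      (!![0, 1; -k, -d] *ᵥ ![x t, v t] + U • ![0, β]) s t := by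
  refine hasDerivWithinAt_pi.2 fun i => ?_
  fin_cases i
  · simpa using hx
  · refine hv.congr_deriv ?_
    simp
    linear_combination hode

theorem antitoneOn_Ici_of_hasDerivWithinAt_nonpos {f : ℝ → ℝ} {a : ℝ}
    (h : ∀ t ∈ Ici a, ∃ d ≤ 0, HasDerivWithinAt f d (Ici a) t) : AntitoneOn f (Ici a) := by
  have hf : ∀ t ∈ Ici a, HasDerivWithinAt f (derivWithin f (Ici a) t) (Ici a) t := fun t ht =>
    let ⟨_, _, hd⟩ := h t ht
    hd.differentiableWithinAt.hasDerivWithinAt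
  have hf' : ∀ t ∈ Ici a, derivWithin f (Ici a) t ≤ 0 := fun t ht => by
    obtain ⟨d, hd0, hd⟩ := h t ht
    rwa [hd.derivWithin (uniqueDiffOn_Ici a t ht)]
  exact antitoneOn_of_hasDerivWithinAt_nonpos (convex_Ici a)
    (fun t ht => (hf t ht).continuousWithinAt)
    (fun t ht => (hf t (interior_subset ht)).mono interior_subset)
    (fun t ht => hf' t (interior_subset ht))

theorem stmt_19_general (N M' : ℕ) (hNM : N < M')
    (c₁ c₂ : ℝ)
    (ρx ρu : ℝ) (hρx : 0 ≤ ρx) (hρu : 0 ≤ ρu)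
    (γ : ℝ) (hγ : 0 < γ)
    (ω ζ b : ℕ → ℝ)
    (hω : ∀ n, ω n = (n : ℝ) ^ 2)
    (hζ : ∀ n, ζ n = (c₁ * (ω n)⁻¹ + c₂ * ω n) / 2)
    (A : Matrix (Fin N ⊕ Fin N) (Fin N ⊕ Fin N) ℝ)
    (hA : A = Matrix.fromBlocks 0 1
      (-(Matrix.diagonal fun i : Fin N => (ω ((i : ℕ) + 1)) ^ 2))
      (-(c₁ • (1 : Matrix (Fin N) (Fin N) ℝ)
         + c₂ • Matrix.diagonal fun i : Fin N => (ω ((i : ℕ) + 1)) ^ 2)))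
    (B : (Fin N ⊕ Fin N) → ℝ)
    (hB : B = Sum.elim (fun _ => (0 : ℝ)) (fun i : Fin N => b ((i : ℕ) + 1)))
    (E : Matrix (Fin N ⊕ Fin N) (Fin N) ℝ)
    (Q : Matrix (Fin N ⊕ Fin N) (Fin N ⊕ Fin N) ℝ)
    (hQ : Q = Matrix.fromBlocks
      (Matrix.diagonal fun i : Fin N => 1 + ρx * (ω ((i : ℕ) + 1)) ^ 2) 0 0 0)
    (ρinf : ℝ) (R : ℝ) (hRdef : R = ρu + ρinf)
    (P : Matrix (Fin N ⊕ Fin N) (Fin N ⊕ Fin N) ℝ) (hPsymm : P.IsSymm)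
    (hARE : P * A + Aᵀ * P
      - P * (R⁻¹ • Matrix.vecMulVec B B - (γ ^ 2)⁻¹ • (E * Eᵀ)) * P + Q = 0)
    (ρ : ℕ → ℝ) (Pn : ℕ → Matrix (Fin 2) (Fin 2) ℝ)
    (hresidue : ∀ n, N < n → n ≤ M' → 0 < ρ n ∧ (Pn n).IsSymm ∧ (Pn n).PosDef ∧
      Pn n * !![0, 1; -(ω n) ^ 2, -(2 * ζ n * ω n)]
      + (!![0, 1; -(ω n) ^ 2, -(2 * ζ n * ω n)])ᵀ * Pn n
      + (γ ^ 2)⁻¹ • (Pn n * !![0, 0; 0, 1 + γ ^ 2 * (b n) ^ 2 / ρ n] * Pn n)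
      + !![1 + ρx * (ω n) ^ 2, 0; 0, 0] = 0)
    (hsum : ∑ n ∈ Finset.Ioc N M', ρ n ≤ ρinf)
    (z z' z'' : ℕ → ℝ → ℝ)
    (zN : ℝ → (Fin N ⊕ Fin N) → ℝ)
    (hzN : ∀ t, zN t = Sum.elim (fun i : Fin N => z ((i : ℕ) + 1) t)
      (fun i : Fin N => z' ((i : ℕ) + 1) t))
    (u : ℝ → ℝ)
    (hu : ∀ t, u t = -(R⁻¹ * (B ⬝ᵥ P.mulVec (zN t))))
    (hz : ∀ n ∈ Finset.Icc 1 M', ∀ t ∈ Ici (0 : ℝ),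
      HasDerivWithinAt (z n) (z' n t) (Ici 0) t)
    (hz' : ∀ n ∈ Finset.Icc 1 M', ∀ t ∈ Ici (0 : ℝ),
      HasDerivWithinAt (z' n) (z'' n t) (Ici 0) t)
    (hode : ∀ n ∈ Finset.Icc 1 M', ∀ t ∈ Ici (0 : ℝ),
      z'' n t + 2 * ζ n * ω n * z' n t + (ω n) ^ 2 * z n t = b n * u t)
    (V : ℝ → ℝ)
    (hV : ∀ t, V t = zN t ⬝ᵥ P.mulVec (zN t)
      + ∑ n ∈ Finset.Ioc N M',
          (![z n t, z' n t] ⬝ᵥ (Pn n).mulVec ![z n t, z' n t])) :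
    ∀ s ∈ Ici (0 : ℝ), ∀ t ∈ Ici (0 : ℝ), s ≤ t → V t ≤ V s := by
  have hdamp : ∀ n, 1 ≤ n → 2 * ζ n * ω n = c₁ + c₂ * ω n ^ 2 := fun n hn => by
    have : ω n ≠ 0 := by rw [hω]; exact pow_ne_zero 2 (by exact_mod_cast (by omega : n ≠ 0))
    rw [hζ]; field_simp
  have hctrl : ∀ i : Fin N, (i : ℕ) + 1 ∈ Finset.Icc 1 M' := fun i =>
    Finset.mem_Icc.2 ⟨by omega, by omega⟩
  have hres : ∀ n ∈ Finset.Ioc N M', n ∈ Finset.Icc 1 M' := fun n hn => by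
    rw [Finset.mem_Ioc] at hn; exact Finset.mem_Icc.2 ⟨by omega, hn.2⟩
  refine fun s hs t ht hst => antitoneOn_Ici_of_hasDerivWithinAt_nonpos (fun t ht => ?_) hs ht hst
  have hzN' : HasDerivWithinAt zN (A *ᵥ zN t + u t • B) (Ici 0) t := by
    rw [show zN = _ from funext hzN, hA, hB]
    exact hasDerivWithinAt_sumElim_modal (fun i => hz _ (hctrl i) t ht)
      (fun i => hz' _ (hctrl i) t ht)
      fun i => by rw [← hdamp _ (by omega)]; exact hode _ (hctrl i) t ht
  rw [show V = _ from funext hV]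
  refine ⟨_, ?_, (hasDerivWithinAt_dotProduct_mulVec P hzN').fun_add (HasDerivWithinAt.fun_sum
    fun n hn => hasDerivWithinAt_dotProduct_mulVec (Pn n) (hasDerivWithinAt_vecTwo_companion
      (hz n (hres n hn) t ht) (hz' n (hres n hn) t ht) (hode n (hres n hn) t ht)))⟩
  have hQpsd : Q.PosSemidef := by
    rw [hQ]; exact PosSemidef.fromBlocks_diagonal_zero fun i => by positivity
  have hρu' : 0 ≤ ρu * u t ^ 2 := by positivity
  have hρinf : 0 ≤ (ρinf - ∑ n ∈ Finset.Ioc N M', ρ n) * u t ^ 2 :=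
    mul_nonneg (sub_nonneg.2 hsum) (sq_nonneg _)
  calc _ ≤ -(R * u t ^ 2) + ∑ n ∈ Finset.Ioc N M', ρ n * u t ^ 2 :=
        add_le_add (hPsymm.closedLoop_lyapunov_deriv_le hQpsd (by positivity) hARE _ (hu t))
          (Finset.sum_le_sum fun n hn => by
            obtain ⟨hρn, hPn, -, hBRL⟩ := hresidue n (Finset.mem_Ioc.1 hn).1 (Finset.mem_Ioc.1 hn).2
            exact hPn.lyapunov_deriv_le_of_boundedReal hρn hγ.ne' (by positivity) hBRL _ _)
    _ = -(ρu * u t ^ 2) - (ρinf - ∑ n ∈ Finset.Ioc N M', ρ n) * u t ^ 2 := by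
        rw [hRdef, ← Finset.sum_mul]; ring
    _ ≤ 0 := by linarith

/-- Remark 5 (internal stability) in the finite modal truncation: along
disturbance-free closed-loop trajectories, the Lyapunov functional
V(t) = z^NᵀPz^N + Σₙ z̄ₙᵀPₙz̄ₙ is non-increasing on [0,∞). -/
theorem stmt_19 (N M' : ℕ) (hN : 0 < N) (hNM : N < M')
    (c₁ c₂ : ℝ) (hc₁ : 0 < c₁) (hc₂ : 0 < c₂)
    (ρx ρu : ℝ) (hρx : 0 ≤ ρx) (hρu : 0 ≤ ρu)
    (γ : ℝ) (hγ : 0 < γ)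
    (xL xR : ℝ) (hxL : 0 < xL) (hLR : xL < xR) (hxR : xR < Real.pi)
    (ω ζ b : ℕ → ℝ)
    (hω : ∀ n, ω n = (n : ℝ) ^ 2)
    (hζ : ∀ n, ζ n = (c₁ * (ω n)⁻¹ + c₂ * ω n) / 2)
    (hb : ∀ n, b n = (n : ℝ) * Real.sqrt (2 / Real.pi) *
      (Real.cos (n * xR) - Real.cos (n * xL)))
    (A : Matrix (Fin N ⊕ Fin N) (Fin N ⊕ Fin N) ℝ)
    (hA : A = Matrix.fromBlocks 0 1
      (-(Matrix.diagonal fun i : Fin N => (ω ((i : ℕ) + 1)) ^ 2))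
      (-(c₁ • (1 : Matrix (Fin N) (Fin N) ℝ)
         + c₂ • Matrix.diagonal fun i : Fin N => (ω ((i : ℕ) + 1)) ^ 2)))
    (B : (Fin N ⊕ Fin N) → ℝ)
    (hB : B = Sum.elim (fun _ => (0 : ℝ)) (fun i : Fin N => b ((i : ℕ) + 1)))
    (E : Matrix (Fin N ⊕ Fin N) (Fin N) ℝ)
    (hE : E = Sum.elim (fun _ _ => (0 : ℝ)) (fun i j => if i = j then 1 else 0))
    (Q : Matrix (Fin N ⊕ Fin N) (Fin N ⊕ Fin N) ℝ)
    (hQ : Q = Matrix.fromBlocks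
      (Matrix.diagonal fun i : Fin N => 1 + ρx * (ω ((i : ℕ) + 1)) ^ 2) 0 0 0)
    (ρinf : ℝ) (hρinf : 0 < ρinf) (R : ℝ) (hRdef : R = ρu + ρinf)
    (P : Matrix (Fin N ⊕ Fin N) (Fin N ⊕ Fin N) ℝ) (hPsymm : P.IsSymm) (hP : P.PosDef)
    (hARE : P * A + Aᵀ * P
      - P * (R⁻¹ • Matrix.vecMulVec B B - (γ ^ 2)⁻¹ • (E * Eᵀ)) * P + Q = 0)
    (ρ : ℕ → ℝ) (Pn : ℕ → Matrix (Fin 2) (Fin 2) ℝ)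
    (hresidue : ∀ n, N < n → n ≤ M' → 0 < ρ n ∧ (Pn n).IsSymm ∧ (Pn n).PosDef ∧
      Pn n * !![0, 1; -(ω n) ^ 2, -(2 * ζ n * ω n)]
      + (!![0, 1; -(ω n) ^ 2, -(2 * ζ n * ω n)])ᵀ * Pn n
      + (γ ^ 2)⁻¹ • (Pn n * !![0, 0; 0, 1 + γ ^ 2 * (b n) ^ 2 / ρ n] * Pn n)
      + !![1 + ρx * (ω n) ^ 2, 0; 0, 0] = 0)
    (hsum : ∑ n ∈ Finset.Ioc N M', ρ n ≤ ρinf)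
    (z z' z'' : ℕ → ℝ → ℝ)
    (zN : ℝ → (Fin N ⊕ Fin N) → ℝ)
    (hzN : ∀ t, zN t = Sum.elim (fun i : Fin N => z ((i : ℕ) + 1) t)
      (fun i : Fin N => z' ((i : ℕ) + 1) t))
    (u : ℝ → ℝ)
    (hu : ∀ t, u t = -(R⁻¹ * (B ⬝ᵥ P.mulVec (zN t))))
    (hz : ∀ n ∈ Finset.Icc 1 M', ∀ t ∈ Ici (0 : ℝ),
      HasDerivWithinAt (z n) (z' n t) (Ici 0) t)
    (hz' : ∀ n ∈ Finset.Icc 1 M', ∀ t ∈ Ici (0 : ℝ),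
      HasDerivWithinAt (z' n) (z'' n t) (Ici 0) t)
    (hz'' : ∀ n ∈ Finset.Icc 1 M', ContinuousOn (z'' n) (Ici 0))
    (hode : ∀ n ∈ Finset.Icc 1 M', ∀ t ∈ Ici (0 : ℝ),
      z'' n t + 2 * ζ n * ω n * z' n t + (ω n) ^ 2 * z n t = b n * u t)
    (V : ℝ → ℝ)
    (hV : ∀ t, V t = zN t ⬝ᵥ P.mulVec (zN t)
      + ∑ n ∈ Finset.Ioc N M',
          (![z n t, z' n t] ⬝ᵥ (Pn n).mulVec ![z n t, z' n t])) :
    ∀ s ∈ Ici (0 : ℝ), ∀ t ∈ Ici (0 : ℝ), s ≤ t → V t ≤ V s :=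
  stmt_19_general N M' hNM c₁ c₂ ρx ρu hρx hρu γ hγ ω ζ b hω hζ A hA B hB E Q hQ ρinf R hRdef P
    hPsymm hARE ρ Pn hresidue hsum z z' z'' zN hzN u hu hz hz' hode V hV
end
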